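/- arXiv:2002.12189 — 10 statements merged into one kernel-verified Lean document; each statement's English description precedes it below -/
import Mathlib

section
/- For all n ≥ 4, there are no Dumont permutations of the fourth kind of length 2n avoiding the pattern 1234. -/
/-- `π` contains the pattern `q` (a length-`k` sequence of distinct values given
as a function `Fin k → Fin k`) if some subsequence of `π` is order-isomorphic to `q`. -/
def PatternContains {n k : ℕ} (π : Equiv.Perm (Fin n)) (q : Fin k → Fin k) : Prop :=
  ∃ f : Fin k → Fin n, StrictMono f ∧ ∀ a b : Fin k, q a < q b ↔ π (f a) < π (f b)

/-- `π` avoids the pattern `q`. -/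
def Avoids {n k : ℕ} (π : Equiv.Perm (Fin n)) (q : Fin k → Fin k) : Prop :=
  ¬ PatternContains π q

/-- A Dumont permutation of the fourth kind of size `2n` (0-based indexing:
position `i` and value `π i` correspond to 1-based position `i+1` and value `π i + 1`):
every deficiency occurs at an even (1-based) position and has an even (1-based) value. -/
def IsDumont4 (n : ℕ) (π : Equiv.Perm (Fin (2 * n))) : Prop :=
  ∀ i : Fin (2 * n), (π i : ℕ) < (i : ℕ) → Even ((i : ℕ) + 1) ∧ Even ((π i : ℕ) + 1)

def p1234 : Fin 4 → Fin 4 := ![0, 1, 2, 3]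
def p1342 : Fin 4 → Fin 4 := ![0, 2, 3, 1]
def p1432 : Fin 4 → Fin 4 := ![0, 3, 2, 1]
def p1324 : Fin 4 → Fin 4 := ![0, 2, 1, 3]
def p1243 : Fin 4 → Fin 4 := ![0, 1, 3, 2]
def p1423 : Fin 4 → Fin 4 := ![0, 3, 1, 2]
def p231 : Fin 3 → Fin 3 := ![1, 2, 0]
def p321 : Fin 3 → Fin 3 := ![2, 1, 0]
def p213 : Fin 3 → Fin 3 := ![1, 0, 2]
def p312 : Fin 3 → Fin 3 := ![2, 0, 1]

/-! In 0-based terms a deficiency sits at an odd position and has an odd value, so even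
positions are weak excedances and every even value is taken weakly to its left. Hence `π 0 = 0`
and `π (2n-2) ≥ 2n-2`. Avoiding `1234` then forces the values `4, 2` onto positions `1, 2`, and
after that every even position `m > 4` to be fixed. For `n ≥ 5` the positions `0, 2, 6, 2n-2`
carry a `1234`; for `n = 4` each of the positions `3, 4, 5` must carry `1` or `7` (otherwise
`0, 2, k, 6` is a `1234`), which is impossible. -/

theorem patternContains_p1234 {N : ℕ} {π : Equiv.Perm (Fin N)} {i j k l : Fin N}
    (hij : i < j) (hjk : j < k) (hkl : k < l) (h₁ : π i < π j) (h₂ : π j < π k)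
    (h₃ : π k < π l) : PatternContains π p1234 := by
  have hp : p1234 = id := by funext a; fin_cases a <;> rfl
  have hf : StrictMono ![i, j, k, l] := by
    rw [Fin.strictMono_iff_lt_succ]; intro a; fin_cases a <;> assumption
  have hπf : StrictMono (π ∘ ![i, j, k, l]) := by
    rw [Fin.strictMono_iff_lt_succ]; intro a; fin_cases a <;> assumption
  exact ⟨_, hf, fun a b => by rw [hp]; exact hπf.lt_iff_lt.symm⟩

namespace IsDumont4

variable {n : ℕ} {π : Equiv.Perm (Fin (2 * n))}

theorem le_apply (hD : IsDumont4 n π) {i : Fin (2 * n)}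
    (h : Even (i : ℕ) ∨ Even (π i : ℕ)) : i ≤ π i := by
  by_contra! hlt
  obtain ⟨hi, hπi⟩ := hD i hlt
  rcases h with h | h
  · exact Nat.even_add_one.mp hi h
  · exact Nat.even_add_one.mp hπi h

theorem le_apply_mk (hD : IsDumont4 n π) {m : ℕ} (hm : m < 2 * n) (he : Even m) :
    m ≤ π ⟨m, hm⟩ :=
  Fin.le_def.1 (hD.le_apply (i := ⟨m, hm⟩) (Or.inl he))

theorem apply_zero (hD : IsDumont4 n π) (hn : 0 < n) : (π ⟨0, by omega⟩ : ℕ) = 0 := by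
  obtain ⟨a, ha⟩ := π.surjective ⟨0, by omega⟩
  have hle : a ≤ π a := hD.le_apply (Or.inr (by simp [ha]))
  rw [show a = ⟨0, by omega⟩ from Fin.ext (by simp [ha, Fin.le_def] at hle; omega)] at ha
  simp [ha]

theorem exists_apply_eq_of_even (hD : IsDumont4 n π) {v : ℕ} (hv : v < 2 * n) (he : Even v)
    (hv₀ : 0 < v) :
    ∃ a : Fin (2 * n), 0 < (a : ℕ) ∧ (a : ℕ) ≤ v ∧ (π a : ℕ) = v := by
  obtain ⟨a, ha⟩ := π.surjective ⟨v, hv⟩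
  have hπa : (π a : ℕ) = v := by rw [ha]
  have h₀ := hD.apply_zero (by omega)
  refine ⟨a, Nat.pos_of_ne_zero fun h => ?_, hπa ▸ hD.le_apply (Or.inr (hπa ▸ he)), hπa⟩
  rw [show a = ⟨0, by omega⟩ from Fin.ext h] at hπa
  omega

theorem apply_one_and_two (hD : IsDumont4 n π) (hA : Avoids π p1234) (hn : 4 ≤ n) :
    (π ⟨1, by omega⟩ : ℕ) = 4 ∧ (π ⟨2, by omega⟩ : ℕ) = 2 := by
  have h₀ := hD.apply_zero (by omega)
  have hlast := hD.le_apply_mk (m := 2 * n - 2) (by omega) ⟨n - 1, by omega⟩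
  obtain ⟨a₂, ha₂₀, ha₂, hπa₂⟩ :=
    hD.exists_apply_eq_of_even (v := 2) (by omega) even_two (by omega)
  obtain ⟨a₄, ha₄₀, ha₄, hπa₄⟩ :=
    hD.exists_apply_eq_of_even (v := 4) (by omega) (by decide) (by omega)
  have hne : (a₂ : ℕ) ≠ a₄ := fun h => by rw [Fin.ext h] at hπa₂; omega
  have hlt : (a₄ : ℕ) < a₂ := by
    refine (lt_or_gt_of_ne hne).resolve_left fun h => hA (patternContains_p1234
      (i := ⟨0, by omega⟩) (j := a₂) (k := a₄) (l := ⟨2 * n - 2, by omega⟩)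
      ?_ ?_ ?_ ?_ ?_ ?_) <;> simp only [Fin.lt_def] <;> omega
  rw [show a₄ = ⟨1, by omega⟩ from Fin.ext (show (a₄ : ℕ) = 1 by omega)] at hπa₄
  rw [show a₂ = ⟨2, by omega⟩ from Fin.ext (show (a₂ : ℕ) = 2 by omega)] at hπa₂
  exact ⟨hπa₄, hπa₂⟩

theorem apply_eq_self_of_even (hD : IsDumont4 n π) (hA : Avoids π p1234) (hn : 4 ≤ n) {m : ℕ}
    (hm : m < 2 * n) (he : Even m) (h4 : 4 < m) : (π ⟨m, hm⟩ : ℕ) = m := by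
  have h₀ := hD.apply_zero (by omega)
  have h₁ := (hD.apply_one_and_two hA hn).1
  have hπm := hD.le_apply_mk hm he
  obtain ⟨a, ha, ham, hπa⟩ := hD.exists_apply_eq_of_even hm he (by omega)
  by_contra hne
  have ha₁ : (a : ℕ) ≠ 1 := fun h => by
    rw [show a = ⟨1, by omega⟩ from Fin.ext h] at hπa; omega
  have ham' : (a : ℕ) ≠ m := fun h => by
    rw [show a = ⟨m, hm⟩ from Fin.ext h] at hπa; omega
  refine hA (patternContains_p1234 (i := ⟨0, by omega⟩) (j := ⟨1, by omega⟩) (k := a)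
    (l := ⟨m, hm⟩) ?_ ?_ ?_ ?_ ?_ ?_) <;> simp only [Fin.lt_def] <;> omega

theorem not_avoids_p1234_of_five_le (hD : IsDumont4 n π) (hn : 5 ≤ n) : ¬ Avoids π p1234 := by
  intro hA
  have h₀ := hD.apply_zero (by omega)
  have h₂ := (hD.apply_one_and_two hA (by omega)).2
  have h₆ := hD.apply_eq_self_of_even hA (by omega) (m := 6) (by omega) (by decide) (by omega)
  have hlast := hD.le_apply_mk (m := 2 * n - 2) (by omega) ⟨n - 1, by omega⟩
  refine hA (patternContains_p1234 (i := ⟨0, by omega⟩) (j := ⟨2, by omega⟩)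
    (k := ⟨6, by omega⟩) (l := ⟨2 * n - 2, by omega⟩) ?_ ?_ ?_ ?_ ?_ ?_) <;>
    simp only [Fin.lt_def] <;> omega

theorem not_avoids_p1234_of_eq_four {π : Equiv.Perm (Fin (2 * 4))} (hD : IsDumont4 4 π) :
    ¬ Avoids π p1234 := by
  intro hA
  have h₀ := hD.apply_zero (by omega)
  have h₂ := (hD.apply_one_and_two hA le_rfl).2
  have h₆ := hD.apply_eq_self_of_even hA le_rfl (m := 6) (by omega) (by decide) (by omega)
  have hinj : ∀ {i j : Fin (2 * 4)}, (i : ℕ) ≠ j → (π i : ℕ) ≠ π j :=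
    fun h => Fin.val_injective.ne (π.injective.ne (Fin.val_injective.ne_iff.1 h))
  have hmid : ∀ k : Fin (2 * 4), 2 < (k : ℕ) → (k : ℕ) < 6 →
      (π k : ℕ) = 1 ∨ (π k : ℕ) = 7 := by
    intro k hk₂ hk₆
    have := hinj (i := k) (j := ⟨0, by omega⟩) (by simp; omega)
    have := hinj (i := k) (j := ⟨2, by omega⟩) (by simp; omega)
    have := hinj (i := k) (j := ⟨6, by omega⟩) (by simp; omega)
    have := (π k).isLt
    by_contra hk
    refine hA (patternContains_p1234 (i := ⟨0, by omega⟩) (j := ⟨2, by omega⟩) (k := k)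
      (l := ⟨6, by omega⟩) ?_ ?_ ?_ ?_ ?_ ?_) <;> simp only [Fin.lt_def] <;> omega
  have := hmid ⟨3, by omega⟩ (by simp) (by simp)
  have := hmid ⟨4, by omega⟩ (by simp) (by simp)
  have := hmid ⟨5, by omega⟩ (by simp) (by simp)
  have := hinj (i := ⟨3, by omega⟩) (j := ⟨4, by omega⟩) (by simp)
  have := hinj (i := ⟨3, by omega⟩) (j := ⟨5, by omega⟩) (by simp)
  have := hinj (i := ⟨4, by omega⟩) (j := ⟨5, by omega⟩) (by simp)
  omega

end IsDumont4

/-- For all n ≥ 4, there are no Dumont-4 permutations of length 2n avoiding 1234. -/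
theorem stmt_0 (n : ℕ) (hn : 4 ≤ n) :
    ¬ ∃ π : Equiv.Perm (Fin (2 * n)), IsDumont4 n π ∧ Avoids π p1234 := by
  rintro ⟨π, hD, hA⟩
  obtain rfl | hn := hn.eq_or_lt
  · exact hD.not_avoids_p1234_of_eq_four hA
  · exact hD.not_avoids_p1234_of_five_le hn hA
end

section
/- If π is a Dumont permutation of the fourth kind of length 2n avoiding the pattern 1342, then every odd entry is a fixed point: π(2k-1) = 2k-1 for all 1 ≤ k ≤ n. -/
lemma sm4_aux {N : ℕ} (w x y z : Fin N) (h1 : w < x) (h2 : x < y) (h3 : y < z) :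
    StrictMono (![w,x,y,z] : Fin 4 → Fin N) := by
  rw [Fin.strictMono_iff_lt_succ]
  intro t
  fin_cases t <;> simpa

lemma pat4_aux {N : ℕ} (π : Equiv.Perm (Fin N)) (w x y z : Fin N)
    (h1 : (π w : ℕ) < π z) (h2 : (π z : ℕ) < π x) (h3 : (π x : ℕ) < π y) :
    ∀ a b : Fin 4, p1342 a < p1342 b ↔ π ((![w,x,y,z] : Fin 4 → Fin N) a) < π ((![w,x,y,z] : Fin 4 → Fin N) b) := by
  intro a b
  fin_cases a <;> fin_cases b <;> simp [p1342] <;>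
    first
      | exact Fin.lt_def.mpr (by omega)
      | exact Fin.le_def.mpr (by omega)

theorem key_aux (n : ℕ) (π : Equiv.Perm (Fin (2 * n)))
    (hπ : IsDumont4 n π) (hav : Avoids π p1342) :
    ∀ j, ∀ hj : 2 * j < 2 * n, π ⟨2 * j, hj⟩ = ⟨2 * j, hj⟩ := by
  intro j
  induction j using Nat.strong_induction_on with
  | _ j IH =>
  intro hj
  set i : Fin (2 * n) := ⟨2 * j, hj⟩ with hidef
  have hival : (i : ℕ) = 2 * j := rfl
  -- no deficiency at i
  have h1 : (i : ℕ) ≤ (π i : ℕ) := by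
    by_contra h
    push_neg at h
    have := (hπ i h).1
    rw [hival] at this
    rcases this with ⟨t, ht⟩
    omega
  by_contra hne
  have h2 : (i : ℕ) < (π i : ℕ) := by
    rcases lt_or_eq_of_le h1 with h | h
    · exact h
    · exact absurd (Fin.ext h.symm) hne
  -- the position m of value i
  set m : Fin (2 * n) := π.symm i with hmdef
  have hπm : π m = i := π.apply_symm_apply i
  have h3 : (m : ℕ) ≤ 2 * j := by
    by_contra h
    push_neg at h
    have hd : (π m : ℕ) < (m : ℕ) := by rw [hπm, hival]; omega
    have := (hπ m hd).2
    rw [hπm, hival] at this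
    rcases this with ⟨t, ht⟩
    omega
  have hmi : m ≠ i := by
    intro h
    exact hne (h ▸ hπm)
  have h4 : (m : ℕ) < 2 * j := by
    rcases lt_or_eq_of_le h3 with h | h
    · exact h
    · exact absurd (Fin.ext (h.trans hival.symm)) hmi
  have h5 : Odd (m : ℕ) := by
    rcases Nat.even_or_odd (m : ℕ) with he | ho
    · exfalso
      rcases he with ⟨j', hj'⟩
      have hj'lt : j' < j := by omega
      have hmeq : m = ⟨2 * j', by omega⟩ := Fin.ext (by simp <;> omega)
      have hfix := IH j' hj'lt (by omega)
      rw [← hmeq] at hfix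
      rw [hπm] at hfix
      have hval : (m : ℕ) = 2 * j := hfix ▸ hival
      omega
    · exact ho
  have hj1 : 1 ≤ j := by rcases h5 with ⟨t, ht⟩; omega
  -- pigeonhole
  set A : Finset (Fin (2 * n)) :=
    Finset.univ.filter (fun v => Odd (v : ℕ) ∧ (v : ℕ) < 2 * j) with hAdef
  have hmA : m ∈ A := by simp [hAdef, h5, h4]
  have hex : ∃ v ∈ A, 2 * j ≤ ((π.symm v : Fin (2 * n)) : ℕ) := by
    by_contra hall
    push_neg at hall
    have hsub : A.image π.symm ⊆ A.erase m := by
      intro p hp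
      rw [Finset.mem_image] at hp
      obtain ⟨v, hv, rfl⟩ := hp
      obtain ⟨hvodd, hvlt⟩ : Odd (v : ℕ) ∧ (v : ℕ) < 2 * j := by
        simpa [hAdef] using hv
      have hplt : ((π.symm v : Fin (2 * n)) : ℕ) < 2 * j := hall v hv
      rw [Finset.mem_erase]
      constructor
      · intro h
        rw [hmdef] at h
        have : v = i := π.symm.injective h
        rw [this, hival] at hvlt
        omega
      · simp only [hAdef, Finset.mem_filter, Finset.mem_univ, true_and]
        refine ⟨?_, hplt⟩
        rcases Nat.even_or_odd ((π.symm v : Fin (2 * n)) : ℕ) with he | ho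
        · exfalso
          rcases he with ⟨j', hj'⟩
          have hj'lt : j' < j := by omega
          have hpeq : (π.symm v : Fin (2 * n)) = ⟨2 * j', by omega⟩ := Fin.ext (by simp <;> omega)
          have hfix := IH j' hj'lt (by omega)
          rw [← hpeq] at hfix
          rw [π.apply_symm_apply] at hfix
          rw [hfix] at hvodd
          rcases hvodd with ⟨t, ht⟩
          omega
        · exact ho
    have hcard : A.card ≤ (A.erase m).card := by
      calc A.card = (A.image π.symm).card :=
            (Finset.card_image_of_injective A π.symm.injective).symm
        _ ≤ _ := Finset.card_le_card hsub
    have := Finset.card_erase_lt_of_mem hmA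
    omega
  obtain ⟨v, hvA, hv2⟩ := hex
  obtain ⟨hvodd, hvlt⟩ : Odd (v : ℕ) ∧ (v : ℕ) < 2 * j := by simpa [hAdef] using hvA
  set p : Fin (2 * n) := π.symm v with hpdef
  have hπp : π p = v := π.apply_symm_apply v
  have hpne : (p : ℕ) ≠ 2 * j := by
    intro h
    have : p = i := Fin.ext (h.trans hival.symm)
    rw [this] at hπp
    have : ((π i : Fin (2*n)) : ℕ) = (v : ℕ) := by rw [hπp]
    rw [hival] at h2
    omega
  have hpgt : 2 * j < (p : ℕ) := lt_of_le_of_ne hv2 (Ne.symm hpne)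
  -- fixed point at 0
  have h0 : (0 : ℕ) < 2 * n := by omega
  have hfix0 : π ⟨0, h0⟩ = ⟨0, h0⟩ := by
    have := IH 0 hj1 (by omega)
    simpa using this
  have hm0 : 0 < (m : ℕ) := by rcases h5 with ⟨t, ht⟩; omega
  have hv0 : 0 < (v : ℕ) := by rcases hvodd with ⟨t, ht⟩; omega
  -- build the pattern
  apply hav
  have hlt1 : (⟨0, h0⟩ : Fin (2 * n)) < m := Fin.lt_def.mpr (by simpa using hm0)
  have hlt2 : m < i := Fin.lt_def.mpr (by rw [hival]; omega)
  have hlt3 : i < p := Fin.lt_def.mpr (by rw [hival]; omega)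
  have e0 : ((π ⟨0, h0⟩ : Fin (2 * n)) : ℕ) = 0 := by rw [hfix0]
  have e1 : ((π m : Fin (2 * n)) : ℕ) = 2 * j := by rw [hπm]
  have e3 : ((π p : Fin (2 * n)) : ℕ) = (v : ℕ) := by rw [hπp]
  refine ⟨![⟨0, h0⟩, m, i, p], sm4_aux _ _ _ _ hlt1 hlt2 hlt3,
    pat4_aux π _ _ _ _ (by omega) (by omega) (by omega)⟩

/-- In a 1342-avoiding Dumont-4 permutation, every odd entry is a fixed point:
(1-based) π(2k-1) = 2k-1 for all 1 ≤ k ≤ n. -/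
theorem stmt_3 (n : ℕ) (π : Equiv.Perm (Fin (2 * n)))
    (hπ : IsDumont4 n π) (hav : Avoids π p1342) :
    ∀ (k : ℕ) (hk1 : 1 ≤ k) (hk2 : k ≤ n),
      π ⟨2 * k - 2, by omega⟩ = ⟨2 * k - 2, by omega⟩ := by
  intro k hk1 hk2
  have h := key_aux n π hπ hav (k - 1) (by omega)
  have h1 : (⟨2 * k - 2, by omega⟩ : Fin (2 * n)) = ⟨2 * (k - 1), by omega⟩ :=
    Fin.ext (by simp <;> omega)
  rw [h1, h]
end

section
/- If π is a Dumont permutation of the fourth kind of length 2n avoiding the pattern 1342, and π(2k) < 2k for some k, then π(2k) = 2k-2. -/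
lemma aux_contains_1342 {N : ℕ} (π : Equiv.Perm (Fin N)) (a b c d : Fin N)
    (hab : a < b) (hbc : b < c) (hcd : c < d)
    (H1 : π a < π d) (H2 : π d < π b) (H3 : π b < π c) :
    PatternContains π p1342 := by
  have Hab : π a < π b := H1.trans H2
  have Hac : π a < π c := Hab.trans H3
  have Hdc : π d < π c := H2.trans H3
  refine ⟨![a, b, c, d], ?_, ?_⟩
  · intro x y hxy
    fin_cases x <;> fin_cases y <;>
      first
        | exact absurd hxy (by decide)
        | exact hab
        | exact hab.trans hbc
        | exact (hab.trans hbc).trans hcd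
        | exact hbc
        | exact hbc.trans hcd
        | exact hcd
  · intro x y
    fin_cases x <;> fin_cases y <;>
      first
        | exact iff_of_true (by decide) Hab
        | exact iff_of_true (by decide) Hac
        | exact iff_of_true (by decide) H1
        | exact iff_of_true (by decide) H3
        | exact iff_of_true (by decide) H2
        | exact iff_of_true (by decide) Hdc
        | exact iff_of_false (by decide) (lt_irrefl _)
        | exact iff_of_false (by decide) (asymm Hab)
        | exact iff_of_false (by decide) (asymm Hac)
        | exact iff_of_false (by decide) (asymm H1)
        | exact iff_of_false (by decide) (asymm H3)
        | exact iff_of_false (by decide) (asymm H2)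
        | exact iff_of_false (by decide) (asymm Hdc)

/-- In a 1342-avoiding Dumont-4 permutation, a deficiency at (1-based) position 2k
must be the entry 2k-2. -/
theorem stmt_4 (n : ℕ) (π : Equiv.Perm (Fin (2 * n)))
    (hπ : IsDumont4 n π) (hav : Avoids π p1342) :
    ∀ (k : ℕ) (hk1 : 1 ≤ k) (hk2 : k ≤ n),
      (π ⟨2 * k - 1, by omega⟩ : ℕ) < 2 * k - 1 →
        (π ⟨2 * k - 1, by omega⟩ : ℕ) = 2 * k - 3 := by
  intro k hk1 hk2 hdef
  have hkn : 2 * k - 1 < 2 * n := by omega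
  set i : Fin (2*n) := ⟨2*k-1, hkn⟩ with hi
  obtain ⟨hpos, hval⟩ := hπ i hdef
  rw [Nat.even_add_one, Nat.not_even_iff] at hval
  by_contra hne
  have hv5 : (π i : ℕ) ≤ 2*k - 5 := by
    simp only [hi] at hdef hne hval ⊢
    omega
  have hv1 : 1 ≤ (π i : ℕ) := by omega
  -- π 0 = 0
  have hz : 0 < 2 * n := by omega
  set z : Fin (2*n) := ⟨0, hz⟩ with hzdef
  have h0 : (π z : ℕ) = 0 := by
    by_contra h00
    have hj : (π (π.symm z) : ℕ) = 0 := by simp [hzdef]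
    have hjpos : 0 < ((π.symm z : Fin (2*n)) : ℕ) := by
      rcases Nat.eq_zero_or_pos ((π.symm z : Fin (2*n)) : ℕ) with h | h
      · exfalso; apply h00
        have he : π.symm z = z := Fin.ext h
        rw [← he]
        simpa using hj
      · exact h
    have h2 := (hπ _ (by rw [hj]; exact hjpos)).2
    rw [hj] at h2
    rw [Nat.even_iff] at h2
    omega
  -- position of value (π i) + 1
  have hv1lt : (π i : ℕ) + 1 < 2 * n := by omega
  set j1 : Fin (2*n) := π.symm ⟨(π i : ℕ) + 1, hv1lt⟩ with hj1def
  have hπj1 : (π j1 : ℕ) = (π i : ℕ) + 1 := by simp [hj1def]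
  have hj1le : (j1 : ℕ) ≤ (π i : ℕ) + 1 := by
    by_contra h
    have h2 := (hπ j1 (by rw [hπj1]; omega)).2
    rw [hπj1, Nat.even_iff] at h2
    omega
  have hj1pos : 0 < (j1 : ℕ) := by
    rcases Nat.eq_zero_or_pos (j1 : ℕ) with h | h
    · exfalso
      have he : j1 = z := Fin.ext h
      rw [he, h0] at hπj1
      omega
    · exact h
  -- position 2k-2 has value ≥ 2k-2
  have hm : 2*k - 2 < 2 * n := by omega
  set m : Fin (2*n) := ⟨2*k-2, hm⟩ with hmdef
  have hcm : 2*k - 2 ≤ (π m : ℕ) := by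
    by_contra h
    push_neg at h
    have h2 := (hπ m (by simpa [hmdef] using h)).1
    rw [Nat.even_iff] at h2
    simp only [hmdef] at h2
    omega
  -- build the 1342 pattern
  apply hav
  refine aux_contains_1342 π z j1 m i ?_ ?_ ?_ ?_ ?_ ?_ <;>
    rw [Fin.lt_def]
  · simpa [hzdef] using hj1pos
  · simp only [hmdef]; omega
  · simp only [hmdef, hi]; omega
  · rw [h0]; omega
  · rw [hπj1]; omega
  · rw [hπj1]; omega
end

section
/- For all n ≥ 1, the number of Dumont permutations of the fourth kind of length 2n avoiding the pattern 1342 equals 2^(n-1). -/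
/-!
Positions and values are 0-based, so a Dumont permutation of the fourth kind may lower only odd
positions, to odd values. Such a `π` sends `0` to `0`, hence it avoids 1342 iff it avoids 231.
It never lowers an even position and never places an even value right of its own index, and
together with avoiding 231 a counting argument shows that it fixes every even position. So `π`
is `oddLift σ` for a permutation `σ` of `Fin n`, and `oddLift σ` avoids 231 iff `σ i ≥ i - 1`
for all `i`. Such a `σ` splits `Fin n` into intervals `[a, b]` with `σ a = b` and
`σ i = i - 1` otherwise, so it is determined by the set of `s < n - 1` with `σ (s + 1) = s`,
and every set occurs.
-/

open Finset Equiv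

theorem Equiv.Perm.apply_mem_of_forall_symm_mem {α : Type*} [DecidableEq α] (σ : Perm α)
    {A B : Finset α} (hAB : ∀ a ∈ A, σ.symm a ∈ B) (hcard : #B ≤ #A) {b : α}
    (hb : b ∈ B) : σ b ∈ A := by
  have hB : A.image σ.symm = B := eq_of_subset_of_card_le (image_subset_iff.2 hAB)
    (by rwa [card_image_of_injective _ σ.symm.injective])
  obtain ⟨a, ha, rfl⟩ := mem_image.1 (hB ▸ hb)
  simpa using ha

section Patterns

variable {N : ℕ} {π : Perm (Fin N)}

theorem patternContains_p231_iff :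
    PatternContains π p231 ↔ ∃ a b c, a < b ∧ b < c ∧ π c < π a ∧ π a < π b := by
  constructor
  · rintro ⟨f, hf, h⟩
    exact ⟨f 0, f 1, f 2, hf (by decide), hf (by decide), (h 2 0).1 (by decide),
      (h 0 1).1 (by decide)⟩
  · rintro ⟨a, b, c, hab, hbc, hca, hab'⟩
    refine ⟨![a, b, c], fun x y hxy => ?_, fun x y => ?_⟩
    · fin_cases x <;> fin_cases y <;> simp at hxy ⊢ <;> order
    · fin_cases x <;> fin_cases y <;> simp [p231] <;> order

theorem patternContains_p1342_iff : PatternContains π p1342 ↔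
    ∃ a b c d, a < b ∧ b < c ∧ c < d ∧ π a < π d ∧ π d < π b ∧ π b < π c := by
  constructor
  · rintro ⟨f, hf, h⟩
    exact ⟨f 0, f 1, f 2, f 3, hf (by decide), hf (by decide), hf (by decide),
      (h 0 3).1 (by decide), (h 3 1).1 (by decide), (h 1 2).1 (by decide)⟩
  · rintro ⟨a, b, c, d, hab, hbc, hcd, had, hdb, hbc'⟩
    refine ⟨![a, b, c, d], fun x y hxy => ?_, fun x y => ?_⟩
    · fin_cases x <;> fin_cases y <;> simp at hxy ⊢ <;> order
    · fin_cases x <;> fin_cases y <;> simp [p1342] <;> order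

theorem avoids_p1342_of_avoids_p231 (h : Avoids π p231) : Avoids π p1342 := by
  rw [Avoids, patternContains_p1342_iff]
  rintro ⟨-, b, c, d, -, hbc, hcd, -, hdb, hbc'⟩
  exact h (patternContains_p231_iff.2 ⟨b, c, d, hbc, hcd, hdb, hbc'⟩)

theorem avoids_p231_of_avoids_p1342 (h0 : ∀ i : Fin N, (i : ℕ) = 0 → (π i : ℕ) = 0)
    (h : Avoids π p1342) : Avoids π p231 := by
  rw [Avoids, patternContains_p231_iff]
  rintro ⟨a, b, c, hab, hbc, hca, hab'⟩
  have hN : 0 < N := a.pos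
  have hz := h0 ⟨0, hN⟩ rfl
  refine h (patternContains_p1342_iff.2 ⟨⟨0, hN⟩, a, b, c, ?_, hab, hbc, ?_, hca, hab'⟩)
  · refine lt_of_le_of_ne (Fin.le_def.2 (Nat.zero_le _)) ?_
    rintro rfl
    rw [Fin.lt_def] at hca
    omega
  · refine lt_of_le_of_ne (Fin.le_def.2 (by omega)) (π.injective.ne ?_)
    rw [Fin.lt_def] at hab hbc
    exact Fin.ne_of_val_ne (by simp only; omega)

end Patterns

def DropAtMostOne {N : ℕ} (σ : Perm (Fin N)) : Prop :=
  ∀ i : Fin N, (i : ℕ) ≤ σ i + 1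

namespace DropAtMostOne

variable {N : ℕ} {σ : Perm (Fin N)}

theorem symm_apply_le (hσ : DropAtMostOne σ) (v : Fin N) : (σ.symm v : ℕ) ≤ v + 1 := by
  simpa using hσ (σ.symm v)

/-- The values below `j` sit at positions `≤ j` other than `i`, and there are only `j` of these,
so position `j` cannot carry a value `≥ j`. -/
theorem apply_add_one_eq (hσ : DropAtMostOne σ) {i j : Fin N} (hij : i < j)
    (hj : (j : ℕ) ≤ σ i) : (σ j : ℕ) + 1 = j := by
  have hlow : ∀ v ∈ Iio j, σ.symm v ∈ (Iic j).erase i := by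
    intro v hv
    rw [mem_Iio, Fin.lt_def] at hv
    have := hσ.symm_apply_le v
    refine mem_erase.2 ⟨fun h => ?_, mem_Iic.2 (Fin.le_def.2 (by omega))⟩
    rw [← h, apply_symm_apply] at hj
    omega
  have hcard : #((Iic j).erase i) ≤ #(Iio j) := by
    rw [card_erase_of_mem (mem_Iic.2 hij.le), Fin.card_Iic, Fin.card_Iio]
    omega
  have hlt := σ.apply_mem_of_forall_symm_mem hlow hcard
    (mem_erase.2 ⟨hij.ne', mem_Iic.2 le_rfl⟩)
  rw [mem_Iio, Fin.lt_def] at hlt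
  have := hσ j
  omega

end DropAtMostOne

namespace IsDumont4

variable {n : ℕ} {π : Perm (Fin (2 * n))}

theorem le_apply_of_even (hD : IsDumont4 n π) {i : Fin (2 * n)} (hi : Even (i : ℕ)) :
    (i : ℕ) ≤ π i := by
  by_contra h
  exact Nat.even_add_one.1 (hD i (by omega)).1 hi

theorem symm_apply_le_of_even (hD : IsDumont4 n π) {v : Fin (2 * n)} (hv : Even (v : ℕ)) :
    (π.symm v : ℕ) ≤ v := by
  by_contra h
  have := (hD (π.symm v) (by simp only [apply_symm_apply]; omega)).2
  rw [apply_symm_apply] at this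
  exact Nat.even_add_one.1 this hv

theorem avoids_p231 (hD : IsDumont4 n π) (hA : Avoids π p1342) : Avoids π p231 := by
  refine avoids_p231_of_avoids_p1342 (fun i hi => ?_) hA
  have h := hD.symm_apply_le_of_even (v := ⟨0, i.pos⟩) ⟨0, rfl⟩
  rw [← show π.symm ⟨0, i.pos⟩ = i from Fin.ext (by simp only at h; omega), apply_symm_apply]

/-- If `π k > k` at an even position `k`, the value `k` sits at some `p < k`; avoiding 231 forces
all values `< k` to positions `< k`, leaving no room for `p`. -/
theorem apply_eq_self_of_even_s5 (hD : IsDumont4 n π) (hA : Avoids π p231) {k : Fin (2 * n)}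
    (hk : Even (k : ℕ)) : π k = k := by
  by_contra hne
  have hk_lt : k < π k := lt_of_le_of_ne (Fin.le_def.2 (hD.le_apply_of_even hk)) (Ne.symm hne)
  set p := π.symm k with hp
  have hπp : π p = k := by simp [hp]
  have hp_lt : p < k := lt_of_le_of_ne (Fin.le_def.2 (hD.symm_apply_le_of_even hk))
    (fun h => hne (by rw [← h, hπp, h]))
  have hlow : ∀ v ∈ Iio k, π.symm v ∈ Iio k := by
    intro v hv
    rw [mem_Iio] at hv ⊢
    by_contra hge
    rcases (not_lt.1 hge).eq_or_lt with heq | hgt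
    · have hπk : π k = v := by rw [heq, apply_symm_apply]
      exact lt_asymm hv (hπk ▸ hk_lt)
    · refine hA (patternContains_p231_iff.2 ⟨p, k, π.symm v, hp_lt, hgt, ?_, ?_⟩) <;>
        simpa [hπp]
  have := π.apply_mem_of_forall_symm_mem hlow le_rfl (mem_Iio.2 hp_lt)
  rw [hπp, mem_Iio] at this
  exact lt_irrefl _ this

end IsDumont4

def oddEquiv (n : ℕ) : Fin n ≃ {x : Fin (2 * n) // Odd (x : ℕ)} where
  toFun i := ⟨⟨2 * i + 1, by omega⟩, odd_two_mul_add_one _⟩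
  invFun x := ⟨x.1 / 2, by omega⟩
  left_inv i := by ext; simp only; omega
  right_inv := by
    rintro ⟨x, k, hk⟩
    ext
    simp only
    omega

@[simp]
theorem val_oddEquiv {n : ℕ} (i : Fin n) : ((oddEquiv n i : Fin (2 * n)) : ℕ) = 2 * i + 1 :=
  rfl

@[simp]
theorem val_oddEquiv_symm {n : ℕ} (x : {x : Fin (2 * n) // Odd (x : ℕ)}) :
    ((oddEquiv n).symm x : ℕ) = x.1 / 2 :=
  rfl

def oddLift {n : ℕ} (σ : Perm (Fin n)) : Perm (Fin (2 * n)) :=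
  Perm.ofSubtype ((oddEquiv n).permCongr σ)

section OddLift

variable {n : ℕ}

theorem oddLift_injective : Function.Injective (oddLift (n := n)) :=
  Perm.ofSubtype_injective.comp (oddEquiv n).permCongr.injective

theorem oddLift_apply_of_even (σ : Perm (Fin n)) {x : Fin (2 * n)} (hx : Even (x : ℕ)) :
    oddLift σ x = x :=
  Perm.ofSubtype_apply_of_not_mem _ (Nat.not_odd_iff_even.2 hx)

theorem val_oddLift_apply_of_odd (σ : Perm (Fin n)) {x : Fin (2 * n)} (hx : Odd (x : ℕ)) :
    (oddLift σ x : ℕ) = 2 * σ ((oddEquiv n).symm ⟨x, hx⟩) + 1 := by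
  rw [oddLift, Perm.ofSubtype_apply_of_mem (p := fun x : Fin (2 * n) => Odd (x : ℕ)) _ hx,
    permCongr_apply]
  rfl

@[simp]
theorem oddLift_apply_oddEquiv (σ : Perm (Fin n)) (i : Fin n) :
    oddLift σ (oddEquiv n i) = oddEquiv n (σ i) := by
  simp [oddLift]

theorem odd_oddLift_apply_iff (σ : Perm (Fin n)) (x : Fin (2 * n)) :
    Odd (oddLift σ x : ℕ) ↔ Odd (x : ℕ) :=
  Perm.ofSubtype_apply_mem_iff_mem (p := fun x : Fin (2 * n) => Odd (x : ℕ)) _ x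

theorem exists_oddLift_eq {π : Perm (Fin (2 * n))}
    (h : ∀ x : Fin (2 * n), Even (x : ℕ) → π x = x) : ∃ σ, oddLift σ = π := by
  let e := Perm.subtypeEquivSubtypePerm fun x : Fin (2 * n) => Odd (x : ℕ)
  let π' := e.symm ⟨π, fun x hx => h x (Nat.not_odd_iff_even.1 hx)⟩
  refine ⟨(oddEquiv n).permCongr.symm π', ?_⟩
  rw [oddLift, apply_symm_apply]
  exact congrArg Subtype.val (e.apply_symm_apply _)

theorem isDumont4_oddLift (σ : Perm (Fin n)) : IsDumont4 n (oddLift σ) := by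
  intro x hx
  rcases Nat.even_or_odd (x : ℕ) with he | ho
  · rw [oddLift_apply_of_even σ he] at hx
    exact absurd hx (lt_irrefl _)
  · exact ⟨ho.add_one, ((odd_oddLift_apply_iff σ x).2 ho).add_one⟩

end OddLift

theorem DropAtMostOne.le_oddLift_apply_add_two {n : ℕ} {σ : Perm (Fin n)}
    (hσ : DropAtMostOne σ) (x : Fin (2 * n)) : (x : ℕ) ≤ oddLift σ x + 2 := by
  rcases Nat.even_or_odd (x : ℕ) with hx | hx
  · rw [oddLift_apply_of_even σ hx]
    omega
  · rw [val_oddLift_apply_of_odd σ hx]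
    have := hσ ((oddEquiv n).symm ⟨x, hx⟩)
    have := Nat.odd_iff.1 hx
    simp only [val_oddEquiv_symm] at *
    omega

theorem avoids_p231_oddLift_iff {n : ℕ} {σ : Perm (Fin n)} :
    Avoids (oddLift σ) p231 ↔ DropAtMostOne σ := by
  constructor
  · intro hA j
    by_contra! h
    set b : Fin (2 * n) := ⟨2 * σ j + 2, by omega⟩
    set c : Fin (2 * n) := ⟨2 * σ j + 4, by omega⟩
    have hb : oddLift σ b = b := oddLift_apply_of_even σ ⟨σ j + 1, by simp only [b]; ring⟩
    have hc : oddLift σ c = c := oddLift_apply_of_even σ ⟨σ j + 2, by simp only [c]; ring⟩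
    refine hA (patternContains_p231_iff.2 ⟨b, c, oddEquiv n j, ?_, ?_, ?_, ?_⟩) <;>
      (simp only [Fin.lt_def, oddLift_apply_oddEquiv, val_oddEquiv, hb, hc, b, c]; omega)
  · intro hσ hA
    obtain ⟨a, b, c, hab, hbc, hca, hab'⟩ := patternContains_p231_iff.1 hA
    have hc := hσ.le_oddLift_apply_add_two c
    rw [Fin.lt_def] at hab hbc hca hab'
    have ha : Odd (a : ℕ) := by
      by_contra ha
      rw [oddLift_apply_of_even σ (Nat.not_odd_iff_even.1 ha)] at hca
      omega
    have hb : Odd (b : ℕ) := by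
      by_contra hb
      rw [oddLift_apply_of_even σ (Nat.not_odd_iff_even.1 hb)] at hab'
      omega
    rw [val_oddLift_apply_of_odd σ ha] at hca hab'
    rw [val_oddLift_apply_of_odd σ hb] at hab'
    have := Nat.odd_iff.1 ha
    have := Nat.odd_iff.1 hb
    have hαβ : (oddEquiv n).symm ⟨a, ha⟩ < (oddEquiv n).symm ⟨b, hb⟩ := by
      simp only [Fin.lt_def, val_oddEquiv_symm]
      omega
    have := hσ.apply_add_one_eq hαβ (by simp only [val_oddEquiv_symm]; omega)
    simp only [val_oddEquiv_symm] at this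
    omega

theorem isDumont4_and_avoids_p1342_iff {n : ℕ} {π : Perm (Fin (2 * n))} :
    IsDumont4 n π ∧ Avoids π p1342 ↔ π ∈ oddLift '' {σ | DropAtMostOne σ} := by
  constructor
  · rintro ⟨hD, hA⟩
    have h231 := hD.avoids_p231 hA
    obtain ⟨σ, rfl⟩ := exists_oddLift_eq fun x hx => hD.apply_eq_self_of_even_s5 h231 hx
    exact ⟨σ, avoids_p231_oddLift_iff.1 h231, rfl⟩
  · rintro ⟨σ, hσ, rfl⟩
    exact ⟨isDumont4_oddLift σ, avoids_p1342_of_avoids_p231 (avoids_p231_oddLift_iff.2 hσ)⟩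

section Links

variable {N : ℕ}

def links (σ : Perm (Fin N)) (s : Fin (N - 1)) : Bool :=
  decide ((σ ⟨s + 1, by omega⟩ : ℕ) = s)

def linkAt (c : Fin (N - 1) → Bool) (s : ℕ) : Bool :=
  if h : s < N - 1 then c ⟨s, h⟩ else false

theorem linkAt_coe (c : Fin (N - 1) → Bool) (s : Fin (N - 1)) : linkAt c s = c s := by
  simp [linkAt]

theorem linkAt_links_iff (σ : Perm (Fin N)) (s : ℕ) :
    linkAt (links σ) s = true ↔ ∃ h : s + 1 < N, (σ ⟨s + 1, h⟩ : ℕ) = s := by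
  unfold linkAt links
  split_ifs with h
  · simp only [decide_eq_true_eq]
    exact ⟨fun h' => ⟨by omega, h'⟩, fun ⟨_, h'⟩ => h'⟩
  · simp only [false_iff, not_exists]
    intro h'
    omega

theorem exists_not_linkAt (c : Fin (N - 1) → Bool) (i : ℕ) :
    ∃ j, i ≤ j ∧ linkAt c j = false :=
  ⟨i + (N - 1), by omega, by simp [linkAt]⟩

def runEnd (c : Fin (N - 1) → Bool) (i : ℕ) : ℕ :=
  Nat.find (exists_not_linkAt c i)

theorem le_runEnd (c : Fin (N - 1) → Bool) (i : ℕ) : i ≤ runEnd c i :=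
  (Nat.find_spec (exists_not_linkAt c i)).1

theorem linkAt_runEnd (c : Fin (N - 1) → Bool) (i : ℕ) : linkAt c (runEnd c i) = false :=
  (Nat.find_spec (exists_not_linkAt c i)).2

theorem linkAt_of_le_of_lt_runEnd (c : Fin (N - 1) → Bool) {i j : ℕ} (hij : i ≤ j)
    (hj : j < runEnd c i) : linkAt c j = true := by
  simpa [hij] using Nat.find_min (exists_not_linkAt c i) hj

theorem runEnd_lt (c : Fin (N - 1) → Bool) (i : Fin N) : runEnd c i < N := by
  have : runEnd c i ≤ N - 1 := Nat.find_min' _ ⟨by omega, by simp [linkAt]⟩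
  have := i.isLt
  omega

def ofLinksFun (c : Fin (N - 1) → Bool) (i : Fin N) : Fin N :=
  if 0 < (i : ℕ) ∧ linkAt c (i - 1) = true then ⟨i - 1, by omega⟩
  else ⟨runEnd c i, runEnd_lt c i⟩

theorem val_ofLinksFun (c : Fin (N - 1) → Bool) (i : Fin N) :
    (ofLinksFun c i : ℕ) =
      if 0 < (i : ℕ) ∧ linkAt c (i - 1) = true then (i : ℕ) - 1 else runEnd c i := by
  unfold ofLinksFun
  split_ifs <;> rfl

theorem ofLinksFun_ne_of_lt (c : Fin (N - 1) → Bool) {i j : Fin N} (hij : i < j) :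
    ofLinksFun c i ≠ ofLinksFun c j := by
  intro h
  replace h := congrArg Fin.val h
  rw [Fin.lt_def] at hij
  rw [val_ofLinksFun, val_ofLinksFun] at h
  split_ifs at h with hi hj hj
  · omega
  · have := le_runEnd c j
    omega
  · have := linkAt_runEnd c i
    rw [h, hj.2] at this
    exact Bool.noConfusion this
  · have := le_runEnd c j
    exact hj ⟨by omega, linkAt_of_le_of_lt_runEnd c (i := i) (by omega) (by omega)⟩

theorem ofLinksFun_injective (c : Fin (N - 1) → Bool) : Function.Injective (ofLinksFun c) := by
  intro i j h
  by_contra hne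
  rcases lt_or_gt_of_ne hne with hij | hij
  exacts [ofLinksFun_ne_of_lt c hij h, ofLinksFun_ne_of_lt c hij h.symm]

noncomputable def ofLinks (c : Fin (N - 1) → Bool) : Perm (Fin N) :=
  Equiv.ofBijective (ofLinksFun c) (Finite.injective_iff_bijective.1 (ofLinksFun_injective c))

theorem dropAtMostOne_ofLinks (c : Fin (N - 1) → Bool) : DropAtMostOne (ofLinks c) := by
  intro i
  have := le_runEnd c i
  change (i : ℕ) ≤ ofLinksFun c i + 1
  rw [val_ofLinksFun]
  split_ifs <;> omega

theorem links_ofLinks (c : Fin (N - 1) → Bool) : links (ofLinks c) = c := by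
  funext s
  change decide ((ofLinksFun c ⟨s + 1, _⟩ : ℕ) = s) = c s
  rw [val_ofLinksFun]
  simp only [add_tsub_cancel_right, linkAt_coe, Nat.zero_lt_succ, true_and]
  have := le_runEnd c (s + 1)
  cases c s
  · simp only [Bool.false_eq_true, if_false, decide_eq_false_iff_not]
    omega
  · simp

theorem DropAtMostOne.ofLinks_links {σ : Perm (Fin N)} (hσ : DropAtMostOne σ) :
    ofLinks (links σ) = σ := by
  ext i
  change (ofLinksFun (links σ) i : ℕ) = σ i
  rw [val_ofLinksFun]
  split_ifs with h
  · obtain ⟨h0, hlink⟩ := h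
    obtain ⟨_, hσi⟩ := (linkAt_links_iff σ _).1 hlink
    rw [show (⟨i - 1 + 1, _⟩ : Fin N) = i from Fin.ext (by simp only; omega)] at hσi
    exact hσi.symm
  · have hi : (i : ℕ) ≤ σ i := by
      by_contra hlt
      have := hσ i
      refine h ⟨by omega, (linkAt_links_iff σ _).2 ⟨by omega, ?_⟩⟩
      rw [show (⟨i - 1 + 1, _⟩ : Fin N) = i from Fin.ext (by simp only; omega)]
      omega
    refine (Nat.find_eq_iff _).2 ⟨⟨hi, Bool.eq_false_iff.2 fun hlink => ?_⟩, ?_⟩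
    · obtain ⟨hlt, hσσ⟩ := (linkAt_links_iff σ _).1 hlink
      have := congrArg Fin.val (σ.injective (Fin.ext hσσ))
      simp only at this
      omega
    · rintro j hj ⟨hij, hlink⟩
      have := hσ.apply_add_one_eq (i := i) (j := ⟨j + 1, by omega⟩)
        (Fin.lt_def.2 (by simp only; omega)) (by simp only; omega)
      rw [(linkAt_links_iff σ j).2 ⟨by omega, by simp only at this; omega⟩] at hlink
      exact Bool.noConfusion hlink

noncomputable def dropAtMostOneEquiv :
    {σ : Perm (Fin N) // DropAtMostOne σ} ≃ (Fin (N - 1) → Bool) where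
  toFun σ := links σ.1
  invFun c := ⟨ofLinks c, dropAtMostOne_ofLinks c⟩
  left_inv σ := Subtype.ext σ.2.ofLinks_links
  right_inv := links_ofLinks

end Links

theorem stmt_5_general (n : ℕ) :
    Nat.card {π : Equiv.Perm (Fin (2 * n)) // IsDumont4 n π ∧ Avoids π p1342} = 2 ^ (n - 1) := by
  calc _ = Nat.card (oddLift '' {σ : Perm (Fin n) | DropAtMostOne σ}) :=
        Nat.card_congr (Equiv.subtypeEquivRight fun _ => isDumont4_and_avoids_p1342_iff)
    _ = Nat.card {σ : Perm (Fin n) // DropAtMostOne σ} :=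
        Nat.card_image_of_injective oddLift_injective _
    _ = Nat.card (Fin (n - 1) → Bool) := Nat.card_congr dropAtMostOneEquiv
    _ = 2 ^ (n - 1) := by simp

/-- For n ≥ 1, the number of Dumont-4 permutations of length 2n avoiding 1342 is 2^(n-1). -/
theorem stmt_5 (n : ℕ) (hn : 1 ≤ n) :
    Nat.card {π : Equiv.Perm (Fin (2 * n)) // IsDumont4 n π ∧ Avoids π p1342} = 2 ^ (n - 1) :=
  stmt_5_general n
end

section
/- For every n ≥ 0, the set of Dumont permutations of the fourth kind of length 2n avoiding 1342 equals the set of Dumont permutations of the fourth kind of length 2n avoiding 231. -/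
lemma dumont4_zero {n : ℕ} {π : Equiv.Perm (Fin (2 * n))} (hd : IsDumont4 n π)
    {i : Fin (2 * n)} (h : (π i : ℕ) = 0) : (i : ℕ) = 0 := by
  by_contra hne
  have hlt : (π i : ℕ) < (i : ℕ) := by omega
  have := (hd i hlt).2
  rw [h] at this
  simp [Nat.even_iff] at this

/-- Dumont-4 permutations avoiding 1342 are exactly the Dumont-4 permutations avoiding 231. -/
theorem stmt_6 (n : ℕ) :
    {π : Equiv.Perm (Fin (2 * n)) | IsDumont4 n π ∧ Avoids π p1342} =
      {π : Equiv.Perm (Fin (2 * n)) | IsDumont4 n π ∧ Avoids π p231} := by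
  ext π
  simp only [Set.mem_setOf_eq]
  constructor
  · rintro ⟨hd, hav⟩
    refine ⟨hd, fun hc => hav ?_⟩
    obtain ⟨g, hg, hpat⟩ := hc
    have hpos : 0 < 2 * n := (g 0).pos
    set z : Fin (2 * n) := ⟨0, hpos⟩ with hz
    have hπz : π z = z := by
      have h1 : ((π.symm z : Fin (2 * n)) : ℕ) = 0 := by
        apply dumont4_zero hd
        simp [hz]
      have h2 : π.symm z = z := Fin.ext h1
      conv_lhs => rw [← h2]
      simp
    have h01 : π (g 0) < π (g 1) := (hpat 0 1).mp (by decide)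
    have h20 : π (g 2) < π (g 0) := (hpat 2 0).mp (by decide)
    have h21 : π (g 2) < π (g 1) := (hpat 2 1).mp (by decide)
    have hzg0 : z < g 0 := by
      rcases lt_or_eq_of_le (show z ≤ g 0 from Fin.le_def.mpr (Nat.zero_le _)) with h | h
      · exact h
      · exfalso
        rw [← h, hπz] at h20
        exact absurd (Fin.lt_def.mp h20) (by simp [hz])
    have hzg : ∀ i : Fin 3, z < g i := by
      intro i
      fin_cases i
      · exact hzg0
      · exact lt_trans hzg0 (hg (by decide))
      · exact lt_trans hzg0 (hg (by decide))
    have k0 : ∀ i : Fin 3, π z < π (g i) := by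
      intro i
      have hne : π (g i) ≠ π z := fun h => absurd (π.injective h) (ne_of_gt (hzg i))
      rw [hπz] at hne ⊢
      have : (π (g i) : ℕ) ≠ 0 := fun h => hne (Fin.ext (by simp [hz, h]))
      exact Fin.lt_def.mpr (by simp [hz]; omega)
    refine ⟨![z, g 0, g 1, g 2], ?_, ?_⟩
    · intro a b hab
      have m01 : g 0 < g 1 := hg (by decide)
      have m12 : g 1 < g 2 := hg (by decide)
      have m02 : g 0 < g 2 := hg (by decide)
      fin_cases a <;> fin_cases b <;>
        simp only [Matrix.cons_val_zero, Matrix.cons_val_one, Matrix.head_cons,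
          Matrix.cons_val_two, Matrix.tail_cons, Matrix.cons_val_three, Fin.isValue] <;>
        first
          | exact absurd hab (by decide)
          | exact hzg 0 | exact hzg 1 | exact hzg 2
          | exact m01 | exact m12 | exact m02
    · intro a b
      fin_cases a <;> fin_cases b <;>
        simp only [Matrix.cons_val_zero, Matrix.cons_val_one, Matrix.head_cons,
          Matrix.cons_val_two, Matrix.tail_cons, Matrix.cons_val_three, Fin.isValue] <;>
        first
          | exact iff_of_true (by decide) (k0 0)
          | exact iff_of_true (by decide) (k0 1)
          | exact iff_of_true (by decide) (k0 2)
          | exact iff_of_true (by decide) h01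
          | exact iff_of_true (by decide) h20
          | exact iff_of_true (by decide) h21
          | exact iff_of_false (by decide) (lt_irrefl _)
          | exact iff_of_false (by decide) (asymm (k0 0))
          | exact iff_of_false (by decide) (asymm (k0 1))
          | exact iff_of_false (by decide) (asymm (k0 2))
          | exact iff_of_false (by decide) (asymm h01)
          | exact iff_of_false (by decide) (asymm h20)
          | exact iff_of_false (by decide) (asymm h21)
  · rintro ⟨hd, hav⟩
    refine ⟨hd, fun hc => hav ?_⟩
    obtain ⟨f, hf, hpat⟩ := hc
    have k12 : π (f 1) < π (f 2) := (hpat 1 2).mp (by decide)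
    have k31 : π (f 3) < π (f 1) := (hpat 3 1).mp (by decide)
    have k32 : π (f 3) < π (f 2) := (hpat 3 2).mp (by decide)
    refine ⟨![f 1, f 2, f 3], ?_, ?_⟩
    · intro a b hab
      have m12 : f 1 < f 2 := hf (by decide)
      have m23 : f 2 < f 3 := hf (by decide)
      have m13 : f 1 < f 3 := hf (by decide)
      fin_cases a <;> fin_cases b <;>
        simp only [Matrix.cons_val_zero, Matrix.cons_val_one, Matrix.head_cons,
          Matrix.cons_val_two, Matrix.tail_cons, Fin.isValue] <;>
        first
          | exact absurd hab (by decide)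
          | exact m12 | exact m23 | exact m13
    · intro a b
      fin_cases a <;> fin_cases b <;>
        simp only [Matrix.cons_val_zero, Matrix.cons_val_one, Matrix.head_cons,
          Matrix.cons_val_two, Matrix.tail_cons, Fin.isValue] <;>
        first
          | exact iff_of_true (by decide) k12
          | exact iff_of_true (by decide) k31
          | exact iff_of_true (by decide) k32
          | exact iff_of_false (by decide) (lt_irrefl _)
          | exact iff_of_false (by decide) (asymm k12)
          | exact iff_of_false (by decide) (asymm k31)
          | exact iff_of_false (by decide) (asymm k32)
end

section
/- For all n ≥ 0, the number of Dumont permutations of the fourth kind of length 2n avoiding the pattern 1432 (equivalently, avoiding 321) equals the n-th Catalan number C_n = (1/(n+1))·binomial(2n, n). -/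
open Finset

def deficiencies {α : Type*} [Fintype α] [LinearOrder α] (π : Equiv.Perm α) : Finset α :=
  {i | π i < i}

@[simp]
theorem mem_deficiencies {α : Type*} [Fintype α] [LinearOrder α] {π : Equiv.Perm α} {i : α} :
    i ∈ deficiencies π ↔ π i < i := by
  simp [deficiencies]

section Patterns

variable {N : ℕ} {π : Equiv.Perm (Fin N)}

theorem patternContains_p321_iff :
    PatternContains π p321 ↔ ∃ i j k, i < j ∧ j < k ∧ π k < π j ∧ π j < π i := by
  constructor
  · rintro ⟨f, hf, hq⟩
    exact ⟨f 0, f 1, f 2, hf (by decide), hf (by decide), (hq 2 1).1 (by decide),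
      (hq 1 0).1 (by decide)⟩
  · rintro ⟨i, j, k, hij, hjk, hkj, hji⟩
    refine ⟨![i, j, k], Fin.strictMono_iff_lt_succ.2 ?_, ?_⟩
    · intro a; fin_cases a <;> simpa
    · intro a b
      fin_cases a <;> fin_cases b <;> simp [p321] <;> order

theorem patternContains_p1432_iff :
    PatternContains π p1432 ↔
      ∃ h i j k, h < i ∧ i < j ∧ j < k ∧ π h < π k ∧ π k < π j ∧ π j < π i := by
  constructor
  · rintro ⟨f, hf, hq⟩
    exact ⟨f 0, f 1, f 2, f 3, hf (by decide), hf (by decide), hf (by decide),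
      (hq 0 3).1 (by decide), (hq 3 2).1 (by decide), (hq 2 1).1 (by decide)⟩
  · rintro ⟨h, i, j, k, hhi, hij, hjk, hhk, hkj, hji⟩
    refine ⟨![h, i, j, k], Fin.strictMono_iff_lt_succ.2 ?_, ?_⟩
    · intro a; fin_cases a <;> simpa
    · intro a b
      fin_cases a <;> fin_cases b <;> simp [p1432] <;> order

theorem exists_lt_apply_lt_apply_of_apply_lt {p : Fin N} (hp : π p < p) :
    ∃ r < p, π p < π r := by
  by_contra! h
  have hmaps : Set.MapsTo π (Iio p) (Iio (π p)) := fun r hr =>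
    mem_Iio.2 ((h r (mem_Iio.1 hr)).lt_of_ne (π.injective.ne (mem_Iio.1 hr).ne))
  have := card_le_card_of_injOn π hmaps π.injective.injOn
  simp only [Fin.card_Iio] at this
  exact absurd hp (not_lt_of_ge (Fin.le_def.2 this))

theorem exists_gt_apply_lt_apply_of_le_apply {p q : Fin N} (hpq : p < q) (hq : q ≤ π q)
    (hqp : π q < π p) : ∃ r > q, π r < π q := by
  by_contra! h
  have hmaps : Set.MapsTo π.symm (Iio (π q)) ((Iio q).erase p) := fun v hv => by
    have hv := mem_Iio.1 hv
    refine mem_erase.2 ⟨fun hp => ?_, mem_Iio.2 ?_⟩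
    · rw [← hp, Equiv.apply_symm_apply] at hqp; order
    · by_contra! hr
      obtain rfl | hr := hr.eq_or_lt
      · simp at hv
      · have := h _ hr; simp only [Equiv.apply_symm_apply] at this; order
  have := card_le_card_of_injOn π.symm hmaps π.symm.injective.injOn
  rw [card_erase_of_mem (mem_Iio.2 hpq)] at this
  simp only [Fin.card_Iio] at this
  have := Fin.le_def.1 hq
  omega

theorem avoids_p321_iff :
    Avoids π p321 ↔ StrictMonoOn π (deficiencies π : Set (Fin N)) ∧
      StrictMonoOn π (deficiencies π : Set (Fin N))ᶜ := by
  simp only [Avoids, patternContains_p321_iff, not_exists, not_and]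
  constructor
  · intro h
    constructor
    · intro p hp q hq hpq
      simp only [mem_coe, mem_deficiencies] at hp hq
      refine lt_of_not_ge fun hqp => ?_
      obtain ⟨r, hrp, hr⟩ := exists_lt_apply_lt_apply_of_apply_lt hp
      exact h r p q hrp hpq (hqp.lt_of_ne (π.injective.ne hpq.ne')) hr
    · intro p hp q hq hpq
      simp only [Set.mem_compl_iff, mem_coe, mem_deficiencies, not_lt] at hp hq
      refine lt_of_not_ge fun hqp => ?_
      have hqp := hqp.lt_of_ne (π.injective.ne hpq.ne')
      obtain ⟨r, hqr, hr⟩ := exists_gt_apply_lt_apply_of_le_apply hpq hq hqp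
      exact h p q r hpq hqr hr hqp
  · rintro ⟨hdef, hexc⟩ i j k hij hjk hkj hji
    by_cases hj : π j < j
    · by_cases hk : π k < k
      · exact (hdef (by simpa using hj) (by simpa using hk) hjk).not_gt hkj
      · order
    · by_cases hi : π i < i
      · order
      · exact (hexc (by simpa using hi) (by simpa using hj) hij).not_gt hji

end Patterns

section MonotonePieces

variable {α β : Type*} [LinearOrder α] [WellFoundedLT α] [LinearOrder β]

theorem StrictMonoOn.eqOn_of_image_eq {f g : α → β} {s : Set α} (hf : StrictMonoOn f s)
    (hg : StrictMonoOn g s) (h : f '' s = g '' s) : Set.EqOn f g s := fun x hx =>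
  congrArg Subtype.val <| DFunLike.congr_fun
    (Subsingleton.elim ((hf.orderIso f s).trans (OrderIso.setCongr _ _ h)) (hg.orderIso g s))
    (⟨x, hx⟩ : s)

theorem Equiv.Perm.eq_of_strictMonoOn {σ τ : Equiv.Perm α} {s : Set α}
    (hσ : StrictMonoOn σ s) (hσc : StrictMonoOn σ sᶜ) (hτ : StrictMonoOn τ s)
    (hτc : StrictMonoOn τ sᶜ) (h : σ '' s = τ '' s) : σ = τ := by
  have hc : σ '' sᶜ = τ '' sᶜ := by rw [Equiv.image_compl, Equiv.image_compl, h]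
  ext x
  by_cases hx : x ∈ s
  · rw [hσ.eqOn_of_image_eq hτ h hx]
  · rw [hσc.eqOn_of_image_eq hτc hc hx]

end MonotonePieces

section MonoOnPerm

theorem card_subtype_mem_eq {α : Type*} {A B : Finset α} (h : #A = #B) :
    Fintype.card A = Fintype.card B := by
  simpa using h

variable {α β : Type*} [LinearOrder α] [Fintype α] [LinearOrder β] [Fintype β]

noncomputable def orderIsoOfCardEq (h : Fintype.card α = Fintype.card β) : α ≃o β :=
  (Fintype.orderIsoFinOfCardEq α h).symm.trans (Fintype.orderIsoFinOfCardEq β rfl)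

variable {A B : Finset α}

theorem card_subtype_not_mem_eq (h : #A = #B) :
    Fintype.card {x // x ∉ A} = Fintype.card {x // x ∉ B} := by
  simp [Fintype.card_subtype_compl, h]

noncomputable def monoOnPerm (A B : Finset α) (h : #A = #B) : Equiv.Perm α :=
  (Equiv.sumCompl (· ∈ A)).symm.trans <|
    (Equiv.sumCongr (orderIsoOfCardEq (card_subtype_mem_eq h)).toEquiv
      (orderIsoOfCardEq (card_subtype_not_mem_eq h)).toEquiv).trans (Equiv.sumCompl (· ∈ B))

variable {h : #A = #B}

theorem monoOnPerm_mem_iff {x : α} : monoOnPerm A B h x ∈ B ↔ x ∈ A := by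
  by_cases hx : x ∈ A
  · simp [monoOnPerm, Equiv.sumCompl_symm_apply_of_pos hx, hx]
  · simpa [monoOnPerm, Equiv.sumCompl_symm_apply_of_neg hx, hx] using
      (orderIsoOfCardEq (card_subtype_not_mem_eq h) ⟨x, hx⟩).2

theorem strictMonoOn_monoOnPerm : StrictMonoOn (monoOnPerm A B h) A := by
  intro x (hx : x ∈ A) y (hy : y ∈ A) hxy
  simp only [monoOnPerm, Equiv.trans_apply, Equiv.sumCompl_symm_apply_of_pos hx,
    Equiv.sumCompl_symm_apply_of_pos hy, Equiv.sumCongr_apply, Sum.map_inl,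
    Equiv.sumCompl_apply_inl]
  exact (orderIsoOfCardEq (card_subtype_mem_eq h)).strictMono (Subtype.mk_lt_mk.2 hxy)

theorem strictMonoOn_monoOnPerm_compl : StrictMonoOn (monoOnPerm A B h) (↑A)ᶜ := by
  intro x (hx : x ∉ A) y (hy : y ∉ A) hxy
  simp only [monoOnPerm, Equiv.trans_apply, Equiv.sumCompl_symm_apply_of_neg hx,
    Equiv.sumCompl_symm_apply_of_neg hy, Equiv.sumCongr_apply, Sum.map_inr,
    Equiv.sumCompl_apply_inr]
  exact (orderIsoOfCardEq (card_subtype_not_mem_eq h)).strictMono (Subtype.mk_lt_mk.2 hxy)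

theorem map_monoOnPerm : A.map (monoOnPerm A B h).toEmbedding = B := by
  ext b
  simp only [mem_map, Equiv.coe_toEmbedding]
  constructor
  · rintro ⟨a, ha, rfl⟩
    exact monoOnPerm_mem_iff.2 ha
  · intro hb
    exact ⟨_, monoOnPerm_mem_iff.1 (by rwa [Equiv.apply_symm_apply]), Equiv.apply_symm_apply _ _⟩

end MonoOnPerm

section Ballot

theorem card_filter_lt_lt_card_filter_le {α : Type*} [LinearOrder α] {s : Finset α} {x : α}
    (hx : x ∈ s) : #{a ∈ s | a < x} < #{a ∈ s | a ≤ x} :=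
  card_lt_card <| (ssubset_iff_of_subset (monotone_filter_right s fun _ _ => le_of_lt)).2
    ⟨x, mem_filter.2 ⟨hx, le_rfl⟩, fun h => lt_irrefl x (mem_filter.1 h).2⟩

variable {α : Type*} [LinearOrder α] [Fintype α]

def IsBallotPair (A B : Finset α) : Prop :=
  #A = #B ∧ ∀ x, #{a ∈ A | a ≤ x} ≤ #{b ∈ B | b < x}

theorem isBallotPair_deficiencies (π : Equiv.Perm α) :
    IsBallotPair (deficiencies π) ((deficiencies π).map π.toEmbedding) := by
  refine ⟨(card_map _).symm, fun x => card_le_card_of_injOn π (fun a ha => ?_) π.injective.injOn⟩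
  obtain ⟨ha, hax⟩ := mem_filter.1 ha
  exact mem_filter.2 ⟨mem_map_of_mem _ ha, (mem_deficiencies.1 ha).trans_le hax⟩

variable {A B : Finset α}

theorem monoOnPerm_apply_lt (hAB : IsBallotPair A B) {x : α} (hx : x ∈ A) :
    monoOnPerm A B hAB.1 x < x := by
  set σ := monoOnPerm A B hAB.1
  by_contra! hle
  have hmaps : Set.MapsTo σ.symm ({b ∈ B | b < x} : Finset α) ({a ∈ A | a < x} : Finset α) :=
      fun b hb => by
    obtain ⟨hb, hbx⟩ := mem_filter.1 hb
    have hσb : σ.symm b ∈ A := monoOnPerm_mem_iff.1 (by rwa [Equiv.apply_symm_apply])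
    refine mem_filter.2 ⟨hσb, ((strictMonoOn_monoOnPerm (h := hAB.1)).lt_iff_lt hσb hx).1 ?_⟩
    rw [Equiv.apply_symm_apply]
    exact hbx.trans_le hle
  have := card_le_card_of_injOn _ hmaps σ.symm.injective.injOn
  have := card_filter_lt_lt_card_filter_le hx
  have := hAB.2 x
  omega

theorem le_monoOnPerm_apply (hAB : IsBallotPair A B) {x : α} (hx : x ∉ A) :
    x ≤ monoOnPerm A B hAB.1 x := by
  set σ := monoOnPerm A B hAB.1
  -- Otherwise `σ` injects `Aᶜ ∩ (≤ x)` into `Bᶜ ∩ (< x)`, and adding the ballot inequality at `x`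
  -- would give `#(≤ x) ≤ #(< x)`.
  by_contra! hlt
  have hmaps : Set.MapsTo σ ({a ∈ Aᶜ | a ≤ x} : Finset α) ({b ∈ Bᶜ | b < x} : Finset α) :=
      fun a ha => by
    obtain ⟨ha, hax⟩ := mem_filter.1 ha
    refine mem_filter.2 ⟨mem_compl.2 (monoOnPerm_mem_iff.not.2 (mem_compl.1 ha)), ?_⟩
    have hσ := (strictMonoOn_monoOnPerm_compl (h := hAB.1)).le_iff_le (by simpa using ha)
      (by simpa using hx)
    exact (hσ.2 hax).trans_lt hlt
  have hcompl := card_le_card_of_injOn σ hmaps σ.injective.injOn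
  have hsplit : ∀ (s : Finset α) (p : α → Prop) [DecidablePred p],
      #{a ∈ s | p a} + #{a ∈ sᶜ | p a} = #{a | p a} := fun s p _ => by
    rw [← card_union_of_disjoint (disjoint_filter_filter disjoint_compl_right), ← filter_union,
      union_compl]
  have := hsplit A (· ≤ x)
  have := hsplit B (· < x)
  have := card_filter_lt_lt_card_filter_le (mem_univ x)
  have := hAB.2 x
  omega

theorem deficiencies_monoOnPerm (hAB : IsBallotPair A B) :
    deficiencies (monoOnPerm A B hAB.1) = A := by
  ext x
  rw [mem_deficiencies]
  exact ⟨fun hlt => by_contra fun hx => (le_monoOnPerm_apply hAB hx).not_gt hlt,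
    monoOnPerm_apply_lt hAB⟩

end Ballot

section Avoid321

variable {N : ℕ}

theorem avoids_p321_monoOnPerm {A B : Finset (Fin N)} (hAB : IsBallotPair A B) :
    Avoids (monoOnPerm A B hAB.1) p321 := by
  rw [avoids_p321_iff, deficiencies_monoOnPerm hAB]
  exact ⟨strictMonoOn_monoOnPerm, strictMonoOn_monoOnPerm_compl⟩

theorem eq_of_avoids_p321 {π τ : Equiv.Perm (Fin N)} (hπ : Avoids π p321) (hτ : Avoids τ p321)
    (hdef : deficiencies π = deficiencies τ)
    (hval : (deficiencies π).map π.toEmbedding = (deficiencies τ).map τ.toEmbedding) :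
    π = τ := by
  rw [avoids_p321_iff] at hπ hτ
  rw [hdef] at hπ hval
  refine Equiv.Perm.eq_of_strictMonoOn hπ.1 hπ.2 hτ.1 hτ.2 ?_
  simpa only [coe_map, Equiv.coe_toEmbedding] using
    congrArg ((↑) : Finset (Fin N) → Set (Fin N)) hval

end Avoid321

section Dumont

variable {n : ℕ} {π : Equiv.Perm (Fin (2 * n))}

theorem isDumont4_iff :
    IsDumont4 n π ↔ (∀ a ∈ deficiencies π, Odd (a : ℕ)) ∧
      ∀ b ∈ (deficiencies π).map π.toEmbedding, Odd (b : ℕ) := by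
  simp only [IsDumont4, mem_deficiencies, mem_map, Equiv.coe_toEmbedding, forall_exists_index,
    and_imp, forall_apply_eq_imp_iff₂, Nat.even_add_one, Nat.not_even_iff_odd, Fin.lt_def]
  exact ⟨fun h => ⟨fun i hi => (h i hi).1, fun i hi => (h i hi).2⟩,
    fun h i hi => ⟨h.1 i hi, h.2 i hi⟩⟩

theorem IsDumont4.apply_zero_s7 (hD : IsDumont4 n π) (hn : 0 < 2 * n) :
    π ⟨0, hn⟩ = ⟨0, hn⟩ := by
  obtain ⟨z, hz⟩ := π.surjective ⟨0, hn⟩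
  have hz0 : z = ⟨0, hn⟩ := by
    by_contra hz0
    have := (hD z (by rw [hz]; exact Nat.pos_of_ne_zero fun h => hz0 (Fin.ext h))).2
    simp [hz] at this
  rwa [hz0] at hz

theorem avoids_p1432_iff_avoids_p321 (hD : IsDumont4 n π) : Avoids π p1432 ↔ Avoids π p321 := by
  simp only [Avoids, patternContains_p1432_iff, patternContains_p321_iff, not_iff_not]
  constructor
  · rintro ⟨-, i, j, k, -, hij, hjk, -, hkj, hji⟩
    exact ⟨i, j, k, hij, hjk, hkj, hji⟩
  · rintro ⟨i, j, k, hij, hjk, hkj, hji⟩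
    have hn : 0 < 2 * n := i.pos
    have h0 := hD.apply_zero_s7 hn
    have hi : (⟨0, hn⟩ : Fin (2 * n)) < i := by
      refine Fin.lt_def.2 (Nat.pos_of_ne_zero fun hi0 => ?_)
      rw [show i = ⟨0, hn⟩ from Fin.ext hi0, h0] at hji
      simp [Fin.lt_def] at hji
    have hk := hi.trans (hij.trans hjk)
    refine ⟨⟨0, hn⟩, i, j, k, hi, hij, hjk, ?_, hkj, hji⟩
    rw [h0]
    exact lt_of_le_of_ne (Fin.le_def.2 (Nat.zero_le _)) fun h => hk.ne (π.injective (h0.trans h))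

end Dumont

section Dyck

open DyckStep

variable {m : ℕ}

def dyckStep (A B : Finset (Fin m)) (t : ℕ) : DyckStep :=
  if Even t then if ∃ a ∈ A, (a : ℕ) = t + 1 then D else U
  else if ∃ b ∈ B, (b : ℕ) = t then U else D

def dyckList (A B : Finset (Fin m)) : List DyckStep := (List.range m).map (dyckStep A B)

theorem getElem?_dyckList (A B : Finset (Fin m)) (t : ℕ) :
    (dyckList A B)[t]? = if t < m then some (dyckStep A B t) else none := by
  split_ifs with h <;> simp [dyckList, h]

theorem count_take_dyckList (A B : Finset (Fin m)) (s : DyckStep) (i : ℕ) :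
    ((dyckList A B).take i).count s = Nat.count (dyckStep A B · = s) (min i m) := by
  simp only [dyckList, ← List.map_take, List.take_range, Nat.count, List.count_eq_countP,
    List.countP_map]
  rfl

theorem count_dyckStep_add_count_dyckStep (A B : Finset (Fin m)) (k : ℕ) :
    Nat.count (dyckStep A B · = U) k + Nat.count (dyckStep A B · = D) k = k := by
  induction k with
  | zero => simp
  | succ k ih =>
    rw [Nat.count_succ, Nat.count_succ]
    rcases (dyckStep A B k).dichotomy with h | h <;> simp [h] <;> omega

theorem count_mem_eq_card_filter (A : Finset (Fin m)) (k : ℕ) :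
    Nat.count (fun t => ∃ a ∈ A, (a : ℕ) = t) k = #(A.filter fun a : Fin m => (a : ℕ) < k) := by
  have : {t ∈ range k | ∃ a ∈ A, (a : ℕ) = t} =
      (A.filter fun a : Fin m => (a : ℕ) < k).map Fin.valEmbedding := by
    ext t
    simp only [mem_filter, mem_range, mem_map, Fin.valEmbedding_apply]
    constructor
    · rintro ⟨ht, a, ha, rfl⟩
      exact ⟨a, ⟨ha, ht⟩, rfl⟩
    · rintro ⟨a, ⟨ha, hak⟩, rfl⟩
      exact ⟨hak, a, ha, rfl⟩
  rw [Nat.count_eq_card_filter_range, this, card_map]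

theorem card_filter_le_eq_count (A : Finset (Fin m)) (x : Fin m) :
    #{a ∈ A | a ≤ x} = Nat.count (fun t => ∃ a ∈ A, (a : ℕ) = t) (x + 1) := by
  rw [count_mem_eq_card_filter]
  simp only [Fin.le_def, Nat.lt_succ_iff]

theorem card_filter_lt_eq_count (A : Finset (Fin m)) (x : Fin m) :
    #{a ∈ A | a < x} = Nat.count (fun t => ∃ a ∈ A, (a : ℕ) = t) x := by
  rw [count_mem_eq_card_filter]
  simp only [Fin.lt_def]

theorem card_eq_count (A : Finset (Fin m)) {k : ℕ} (hk : m ≤ k) :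
    #A = Nat.count (fun t => ∃ a ∈ A, (a : ℕ) = t) k := by
  rw [count_mem_eq_card_filter, filter_true_of_mem fun a _ => a.2.trans_le hk]

def decodeDown (l : List DyckStep) : Finset (Fin m) :=
  {a | Odd (a : ℕ) ∧ l[(a : ℕ) - 1]? = some D}

def decodeUp (l : List DyckStep) : Finset (Fin m) :=
  {b | Odd (b : ℕ) ∧ l[(b : ℕ)]? = some U}

variable {A B : Finset (Fin m)}

theorem count_dyckStep_eq_U_add_count (hA : ∀ a ∈ A, Odd (a : ℕ)) (hB : ∀ b ∈ B, Odd (b : ℕ))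
    (k : ℕ) :
    Nat.count (dyckStep A B · = U) k + Nat.count (fun t => ∃ a ∈ A, (a : ℕ) = t) (k + 1) =
      (k + 1) / 2 + Nat.count (fun t => ∃ b ∈ B, (b : ℕ) = t) k := by
  have hA' : ∀ t, (∃ a ∈ A, (a : ℕ) = t) → t % 2 = 1 := by
    rintro _ ⟨a, ha, rfl⟩; exact Nat.odd_iff.1 (hA a ha)
  have hB' : ∀ t, (∃ b ∈ B, (b : ℕ) = t) → t % 2 = 1 := by
    rintro _ ⟨b, hb, rfl⟩; exact Nat.odd_iff.1 (hB b hb)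
  induction k with
  | zero =>
    rw [Nat.count_succ, if_neg fun h => by have := hA' 0 h; omega]
    simp
  | succ k ih =>
    rw [Nat.count_succ (dyckStep A B · = U), Nat.count_succ (fun t => ∃ a ∈ A, (a : ℕ) = t),
      Nat.count_succ (fun t => ∃ b ∈ B, (b : ℕ) = t)]
    rcases Nat.even_or_odd k with hk | hk
    · have hk2 := Nat.even_iff.1 hk
      have hBk : ¬ ∃ b ∈ B, (b : ℕ) = k := fun h => by have := hB' k h; omega
      rw [show dyckStep A B k = _ from if_pos hk, if_neg hBk]
      split_ifs <;> first | omega | simp at *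
    · have hk2 := Nat.odd_iff.1 hk
      have hAk : ¬ ∃ a ∈ A, (a : ℕ) = k + 1 := fun h => by have := hA' _ h; omega
      rw [show dyckStep A B k = _ from if_neg (Nat.not_even_iff_odd.2 hk), if_neg hAk]
      split_ifs <;> first | omega | simp at *

theorem dyckList_isDyck_iff {n : ℕ} {A B : Finset (Fin (2 * n))} (hA : ∀ a ∈ A, Odd (a : ℕ))
    (hB : ∀ b ∈ B, Odd (b : ℕ)) :
    ((dyckList A B).count U = (dyckList A B).count D ∧
      ∀ i, ((dyckList A B).take i).count D ≤ ((dyckList A B).take i).count U) ↔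
      IsBallotPair A B := by
  have hU := count_dyckStep_eq_U_add_count hA hB
  have hUD := count_dyckStep_add_count_dyckStep A B
  have hcA := card_eq_count A (le_refl _)
  have hcA' := card_eq_count A (by omega : 2 * n ≤ 2 * n + 1)
  have hcB := card_eq_count B (le_refl _)
  have hwhole (s : DyckStep) :
      (dyckList A B).count s = Nat.count (dyckStep A B · = s) (2 * n) := by
    have := count_take_dyckList A B s (2 * n)
    rwa [min_self, List.take_of_length_le (by simp [dyckList])] at this
  simp only [hwhole, count_take_dyckList, IsBallotPair,
    card_filter_le_eq_count, card_filter_lt_eq_count]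
  have h2n := hU (2 * n)
  have h2n' := hUD (2 * n)
  rw [show (2 * n + 1) / 2 = n by omega] at h2n
  constructor
  · rintro ⟨hcard, hprefix⟩
    refine ⟨by omega, fun x => ?_⟩
    have := hprefix x
    rw [min_eq_left x.2.le] at this
    have := hU x
    have := hUD x
    omega
  · rintro ⟨hcard, hballot⟩
    refine ⟨by omega, fun i => ?_⟩
    have hle : Nat.count (fun t => ∃ a ∈ A, (a : ℕ) = t) (min i (2 * n) + 1) ≤
        Nat.count (fun t => ∃ b ∈ B, (b : ℕ) = t) (min i (2 * n)) := by
      rcases (min_le_right i (2 * n)).lt_or_eq with hi | hi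
      · exact hballot ⟨_, hi⟩
      · rw [hi]; omega
    have := hU (min i (2 * n))
    have := hUD (min i (2 * n))
    omega

theorem decodeDown_dyckList (hA : ∀ a ∈ A, Odd (a : ℕ)) : decodeDown (dyckList A B) = A := by
  ext a
  simp only [decodeDown, mem_filter, mem_univ, true_and, getElem?_dyckList]
  by_cases ha : Odd (a : ℕ)
  · obtain ⟨k, hk⟩ := ha
    have h1 : (a : ℕ) - 1 < m := by omega
    have h2 : Even ((a : ℕ) - 1) := ⟨k, by omega⟩
    rw [if_pos h1, dyckStep, if_pos h2, Nat.sub_add_cancel (by omega)]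
    simpa [Fin.val_inj] using hA a
  · simpa [ha] using fun h => ha (hA a h)

theorem decodeUp_dyckList (hB : ∀ b ∈ B, Odd (b : ℕ)) : decodeUp (dyckList A B) = B := by
  ext b
  simp only [decodeUp, mem_filter, mem_univ, true_and, getElem?_dyckList]
  by_cases hb : Odd (b : ℕ)
  · rw [if_pos b.2, dyckStep, if_neg (Nat.not_even_iff_odd.2 hb)]
    simp [Fin.val_inj, hb]
  · simpa [hb] using fun h => hb (hB b h)

theorem exists_mem_filter_val_eq_iff {P : ℕ → Prop} [DecidablePred P] {t : ℕ} :
    (∃ a ∈ ({a : Fin m | P a} : Finset (Fin m)), (a : ℕ) = t) ↔ t < m ∧ P t := by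
  simp only [mem_filter, mem_univ, true_and]
  exact ⟨by rintro ⟨a, h, rfl⟩; exact ⟨a.2, h⟩, fun ⟨ht, h⟩ => ⟨⟨t, ht⟩, h, rfl⟩⟩

theorem dyckList_decode {n : ℕ} {l : List DyckStep} (hl : l.length = 2 * n) :
    dyckList (decodeDown l : Finset (Fin (2 * n))) (decodeUp l) = l := by
  refine List.ext_getElem? fun t => ?_
  rw [getElem?_dyckList]
  split_ifs with ht
  · have ht' : t < l.length := hl ▸ ht
    rw [List.getElem?_eq_getElem ht', dyckStep]
    rcases Nat.even_or_odd t with ht2 | ht2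
    · have hD : (∃ a ∈ (decodeDown l : Finset (Fin (2 * n))), (a : ℕ) = t + 1) ↔ l[t] = D := by
        have : t + 1 < 2 * n := by obtain ⟨k, hk⟩ := ht2; omega
        simp only [decodeDown,
          exists_mem_filter_val_eq_iff (P := fun s => Odd s ∧ l[s - 1]? = some D),
          Nat.add_sub_cancel, List.getElem?_eq_getElem ht', Option.some.injEq, this, ht2.add_one,
          true_and]
      rw [if_pos ht2]
      by_cases h : l[t] = D
      · rw [if_pos (hD.2 h), h]
      · rw [if_neg (hD.not.2 h)]
        exact congrArg some ((l[t]).dichotomy.resolve_right h).symm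
    · have hU : (∃ b ∈ (decodeUp l : Finset (Fin (2 * n))), (b : ℕ) = t) ↔ l[t] = U := by
        simp only [decodeUp, exists_mem_filter_val_eq_iff (P := fun s => Odd s ∧ l[s]? = some U),
          List.getElem?_eq_getElem ht', Option.some.injEq, ht, ht2, true_and]
      rw [if_neg (Nat.not_even_iff_odd.2 ht2)]
      by_cases h : l[t] = U
      · rw [if_pos (hU.2 h), h]
      · rw [if_neg (hU.not.2 h)]
        exact congrArg some ((l[t]).dichotomy.resolve_left h).symm
  · simp [hl, not_lt.1 ht]

end Dyck

section Count

def IsOddBallotPair {m : ℕ} (A B : Finset (Fin m)) : Prop :=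
  IsBallotPair A B ∧ (∀ a ∈ A, Odd (a : ℕ)) ∧ ∀ b ∈ B, Odd (b : ℕ)

theorem card_isDumont4_avoids_p321_eq_card_isOddBallotPair (n : ℕ) :
    Nat.card {π : Equiv.Perm (Fin (2 * n)) // IsDumont4 n π ∧ Avoids π p321} =
      Nat.card {AB : Finset (Fin (2 * n)) × Finset (Fin (2 * n)) // IsOddBallotPair AB.1 AB.2} := by
  refine Nat.card_eq_of_bijective
    (fun π => ⟨(deficiencies π.1, (deficiencies π.1).map π.1.toEmbedding),
      isBallotPair_deficiencies π.1, isDumont4_iff.1 π.2.1⟩) ⟨fun π τ h => ?_, ?_⟩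
  · obtain ⟨hdef, hval⟩ := Prod.mk.inj (congrArg Subtype.val h)
    exact Subtype.ext (eq_of_avoids_p321 π.2.2 τ.2.2 hdef hval)
  · rintro ⟨⟨A, B⟩, hAB, hA, hB⟩
    have hdef := deficiencies_monoOnPerm hAB
    have hval :
        (deficiencies (monoOnPerm A B hAB.1)).map (monoOnPerm A B hAB.1).toEmbedding = B := by
      rw [hdef, map_monoOnPerm]
    refine ⟨⟨monoOnPerm A B hAB.1, isDumont4_iff.2 ?_, avoids_p321_monoOnPerm hAB⟩,
      Subtype.ext (Prod.ext hdef hval)⟩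
    rw [hval, hdef]
    exact ⟨hA, hB⟩

variable {n : ℕ} {A B : Finset (Fin (2 * n))}

def IsOddBallotPair.dyckWord (h : IsOddBallotPair A B) : DyckWord where
  toList := dyckList A B
  count_U_eq_count_D := ((dyckList_isDyck_iff h.2.1 h.2.2).2 h.1).1
  count_D_le_count_U := ((dyckList_isDyck_iff h.2.1 h.2.2).2 h.1).2

theorem IsOddBallotPair.semilength_dyckWord (h : IsOddBallotPair A B) :
    h.dyckWord.semilength = n := by
  have := h.dyckWord.two_mul_semilength_eq_length
  change 2 * _ = (dyckList A B).length at this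
  simp only [dyckList, List.length_map, List.length_range] at this
  omega

theorem card_isOddBallotPair_eq_catalan (n : ℕ) :
    Nat.card {AB : Finset (Fin (2 * n)) × Finset (Fin (2 * n)) // IsOddBallotPair AB.1 AB.2} =
      catalan n := by
  rw [← DyckWord.card_dyckWord_semilength_eq_catalan, ← Nat.card_eq_fintype_card]
  refine Nat.card_eq_of_bijective (fun AB => ⟨AB.2.dyckWord, AB.2.semilength_dyckWord⟩)
    ⟨fun AB AB' h => ?_, ?_⟩
  · have h : dyckList AB.1.1 AB.1.2 = dyckList AB'.1.1 AB'.1.2 := congrArg (·.1.toList) h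
    refine Subtype.ext (Prod.ext ?_ ?_)
    · rw [← decodeDown_dyckList (B := AB.1.2) AB.2.2.1, h, decodeDown_dyckList AB'.2.2.1]
    · rw [← decodeUp_dyckList (A := AB.1.1) AB.2.2.2, h, decodeUp_dyckList AB'.2.2.2]
  · rintro ⟨p, hp⟩
    have hl : p.toList.length = 2 * n := by rw [← DyckWord.two_mul_semilength_eq_length, hp]
    have hA : ∀ a ∈ (decodeDown p.toList : Finset (Fin (2 * n))), Odd (a : ℕ) :=
      fun a ha => (mem_filter.1 ha).2.1
    have hB : ∀ b ∈ (decodeUp p.toList : Finset (Fin (2 * n))), Odd (b : ℕ) :=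
      fun b hb => (mem_filter.1 hb).2.1
    have hDyck := (dyckList_isDyck_iff hA hB).1 <| by
      rw [dyckList_decode hl]
      exact ⟨p.count_U_eq_count_D, p.count_D_le_count_U⟩
    exact ⟨⟨(decodeDown p.toList, decodeUp p.toList), hDyck, hA, hB⟩,
      Subtype.ext (DyckWord.ext (dyckList_decode hl))⟩

end Count

/-- The number of Dumont-4 permutations of length 2n avoiding 1432 (equivalently 321)
is the n-th Catalan number. -/
theorem stmt_7 (n : ℕ) :
    Nat.card {π : Equiv.Perm (Fin (2 * n)) // IsDumont4 n π ∧ Avoids π p1432} = catalan n ∧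
    Nat.card {π : Equiv.Perm (Fin (2 * n)) // IsDumont4 n π ∧ Avoids π p321} = catalan n := by
  have h321 : Nat.card {π : Equiv.Perm (Fin (2 * n)) // IsDumont4 n π ∧ Avoids π p321} =
      catalan n := by
    rw [card_isDumont4_avoids_p321_eq_card_isOddBallotPair, card_isOddBallotPair_eq_catalan]
  refine ⟨?_, h321⟩
  rw [← h321]
  exact Nat.card_congr <| Equiv.subtypeEquivRight fun π =>
    and_congr_right fun hD => avoids_p1432_iff_avoids_p321 hD
end

section
/- For all n ≥ 0, the number of Dumont permutations of the fourth kind of length 2n avoiding the pattern 1324 equals n² - n + 1. -/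
-- helper: a 1324 instance gives False
lemma avoid_helper {m : ℕ} {π : Equiv.Perm (Fin m)} (h : Avoids π p1324)
    (q0 q1 q2 q3 : Fin m) (h01 : q0 < q1) (h12 : q1 < q2) (h23 : q2 < q3)
    (v02 : π q0 < π q2) (v21 : π q2 < π q1) (v13 : π q1 < π q3) : False := by
  apply h
  refine ⟨![q0, q1, q2, q3], ?_, ?_⟩
  · intro a b hab
    simp only [Fin.lt_def] at h01 h12 h23 ⊢
    fin_cases a <;> fin_cases b <;> simp_all <;> omega
  · intro a b
    simp only [Fin.lt_def] at v02 v21 v13 ⊢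
    fin_cases a <;> fin_cases b <;> simp [p1324] <;> omega

def Dperm (n a k : ℕ) (hak : a ≤ k) (hk : k + 2 ≤ 2 * n) : Equiv.Perm (Fin (2 * n)) where
  toFun i := if (i : ℕ) = 2 * n - 1 then ⟨a, by omega⟩
    else if (i : ℕ) = k then ⟨2 * n - 1, by omega⟩
    else if h : a ≤ (i : ℕ) ∧ (i : ℕ) < k then ⟨(i : ℕ) + 1, by omega⟩
    else i
  invFun i := if (i : ℕ) = a then ⟨2 * n - 1, by omega⟩
    else if (i : ℕ) = 2 * n - 1 then ⟨k, by omega⟩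
    else if h : a < (i : ℕ) ∧ (i : ℕ) ≤ k then ⟨(i : ℕ) - 1, by omega⟩
    else i
  left_inv i := by
    have hi := i.isLt
    dsimp only
    split_ifs <;> (ext : 1) <;> simp_all <;> omega
  right_inv i := by
    have hi := i.isLt
    dsimp only
    split_ifs <;> (ext : 1) <;> simp_all <;> omega

lemma Dperm_val (n a k : ℕ) (hak : a ≤ k) (hk : k + 2 ≤ 2 * n) (i : Fin (2 * n)) :
    ((Dperm n a k hak hk) i : ℕ) = if (i : ℕ) = 2 * n - 1 then a
      else if (i : ℕ) = k then 2 * n - 1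
      else if a ≤ (i : ℕ) ∧ (i : ℕ) < k then (i : ℕ) + 1
      else i := by
  unfold Dperm
  simp only [Equiv.coe_fn_mk]
  split_ifs <;> rfl

lemma Dperm_isDumont (n a k : ℕ) (hak : a ≤ k) (hk : k + 2 ≤ 2 * n) (ha : Odd a) :
    IsDumont4 n (Dperm n a k hak hk) := by
  intro i hlt
  have hi := i.isLt
  rw [Dperm_val] at hlt ⊢
  obtain ⟨t, rfl⟩ := ha
  split_ifs at hlt ⊢ with h1 h2 h3 <;>
    first
      | exact ⟨⟨n, by omega⟩, ⟨t + 1, by omega⟩⟩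
      | omega

lemma one_isDumont (n : ℕ) : IsDumont4 n 1 := by
  intro i hlt
  simp at hlt

lemma one_avoids (n : ℕ) : Avoids (1 : Equiv.Perm (Fin (2 * n))) p1324 := by
  rintro ⟨f, hmono, hiso⟩
  have h := (hiso 2 1).mp (by decide)
  simp only [Equiv.Perm.coe_one, id_eq] at h
  exact absurd (hmono (by decide : (1 : Fin 4) < 2)) (not_lt.mpr h.le)

lemma Dperm_avoids (n a k : ℕ) (hak : a ≤ k) (hk : k + 2 ≤ 2 * n) :
    Avoids (Dperm n a k hak hk) p1324 := by
  rintro ⟨f, hmono, hiso⟩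
  set π := Dperm n a k hak hk with hπ
  have v21 : π (f 2) < π (f 1) := (hiso 2 1).mp (by decide)
  have v13 : π (f 1) < π (f 3) := (hiso 1 3).mp (by decide)
  have h12 : f 1 < f 2 := hmono (by decide : (1 : Fin 4) < 2)
  have h23 : f 2 < f 3 := hmono (by decide : (2 : Fin 4) < 3)
  have e1 := Dperm_val n a k hak hk (f 1)
  have e2 := Dperm_val n a k hak hk (f 2)
  have e3 := Dperm_val n a k hak hk (f 3)
  rw [← hπ] at e1 e2 e3
  have l1 := (f 1).isLt
  have l2 := (f 2).isLt
  have l3 := (f 3).isLt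
  have lv3 := (π (f 3)).isLt
  rw [Fin.lt_def] at v21 v13 h12 h23
  split_ifs at e1 e2 <;> omega

lemma Dperm_ne_one (n a k : ℕ) (hak : a ≤ k) (hk : k + 2 ≤ 2 * n) :
    Dperm n a k hak hk ≠ 1 := by
  intro h
  have := Dperm_val n a k hak hk ⟨2 * n - 1, by omega⟩
  rw [h] at this
  simp at this
  omega

lemma Dperm_inj (n a k a' k' : ℕ) (hak : a ≤ k) (hk : k + 2 ≤ 2 * n)
    (hak' : a' ≤ k') (hk' : k' + 2 ≤ 2 * n)
    (h : Dperm n a k hak hk = Dperm n a' k' hak' hk') : a = a' ∧ k = k' := by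
  have e1 := congrArg (fun σ : Equiv.Perm (Fin (2 * n)) => ((σ ⟨2 * n - 1, by omega⟩ : Fin (2 * n)) : ℕ)) h
  have e2 := congrArg (fun σ : Equiv.Perm (Fin (2 * n)) => ((σ ⟨k, by omega⟩ : Fin (2 * n)) : ℕ)) h
  simp only [Dperm_val] at e1 e2
  split_ifs at e1 e2 <;> omega

lemma pi_zero {n : ℕ} {π : Equiv.Perm (Fin (2 * n))} (hd : IsDumont4 n π) (hn : 0 < n) :
    (π ⟨0, by omega⟩ : ℕ) = 0 := by
  by_contra h0
  set j := π.symm ⟨0, by omega⟩ with hjd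
  have hj1 : π j = ⟨0, by omega⟩ := Equiv.apply_symm_apply π _
  have hjpos : 0 < (j : ℕ) := by
    rcases Nat.eq_zero_or_pos (j : ℕ) with h | h
    · exfalso
      have hje : j = ⟨0, by omega⟩ := Fin.ext h
      rw [hje] at hj1
      exact h0 (congrArg Fin.val hj1)
    · exact h
  have := hd j (by rw [hj1]; exact hjpos)
  rw [hj1] at this
  simpa using this.2

lemma no_early {n : ℕ} {π : Equiv.Perm (Fin (2 * n))} (hd : IsDumont4 n π)
    (hav : Avoids π p1324) :
    ∀ i : Fin (2 * n), (i : ℕ) < 2 * n - 1 → (i : ℕ) ≤ (π i : ℕ) := by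
  intro i hi2
  by_contra hcon
  push_neg at hcon
  obtain ⟨hie, hve⟩ := hd i hcon
  rw [Nat.even_iff] at hie hve
  set v := (π i : ℕ) with hvd
  have hilt := i.isLt
  have hn : 0 < n := by omega
  have h0 : (π ⟨0, by omega⟩ : ℕ) = 0 := pi_zero hd hn
  have ht2 : 2 * n - 2 < 2 * n := by omega
  set t : Fin (2 * n) := ⟨2 * n - 2, ht2⟩ with htd
  have hyt : 2 * n - 2 ≤ (π t : ℕ) := by
    by_contra hy
    push_neg at hy
    obtain ⟨he, _⟩ := hd t hy
    rw [Nat.even_iff] at he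
    simp only [htd] at he
    omega
  set y := (π t : ℕ) with hyd
  have hylt : y < 2 * n := (π t).isLt
  have hit : (i : ℕ) < 2 * n - 2 := by omega
  have claim : ∀ q : Fin (2 * n), (q : ℕ) < (i : ℕ) → (π q : ℕ) < v ∨ y < (π q : ℕ) := by
    intro q hq
    by_contra hc
    push_neg at hc
    obtain ⟨hc1, hc2⟩ := hc
    have hne1 : (π q : ℕ) ≠ v := by
      intro h
      have h2 : q = i := π.injective (Fin.ext h)
      rw [h2] at hq; omega
    have hne2 : (π q : ℕ) ≠ y := by
      intro h
      have h2 : q = t := π.injective (Fin.ext h)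
      rw [h2] at hq
      simp only [htd] at hq
      omega
    have hq0 : 0 < (q : ℕ) := by
      rcases Nat.eq_zero_or_pos (q : ℕ) with h | h
      · exfalso
        have hqe : q = ⟨0, by omega⟩ := Fin.ext h
        rw [hqe] at hc1
        omega
      · exact h
    exact avoid_helper hav ⟨0, by omega⟩ q i t
      (by rw [Fin.lt_def]; exact hq0) (by rw [Fin.lt_def]; exact hq)
      (by rw [Fin.lt_def]; simp only [htd]; omega)
      (by rw [Fin.lt_def, h0]; omega)
      (by rw [Fin.lt_def]; omega)
      (by rw [Fin.lt_def]; omega)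
  have hvi : v < (i : ℕ) := hcon
  -- injection into Fin (v + (2n-1-y))
  have hw : ∀ j : Fin (i : ℕ), ((j : ℕ) : ℕ) < 2 * n := fun j => by omega
  set w : Fin (i : ℕ) → ℕ := fun j => (π ⟨(j : ℕ), hw j⟩ : ℕ) with hwd
  have cw : ∀ j, w j < v ∨ y < w j := fun j => claim ⟨(j : ℕ), hw j⟩ j.isLt
  have wlt : ∀ j, w j < 2 * n := fun j => (π ⟨(j : ℕ), hw j⟩).isLt
  have injw : ∀ j1 j2, w j1 = w j2 → j1 = j2 := by
    intro j1 j2 h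
    have h2 := π.injective (Fin.ext h)
    exact Fin.ext (by simpa using congrArg Fin.val h2)
  let g : Fin (i : ℕ) → Fin (v + (2 * n - 1 - y)) := fun j =>
    if h : w j < v then ⟨w j, by omega⟩
    else ⟨v + (w j - y - 1), by have := cw j; have := wlt j; omega⟩
  have ginj : Function.Injective g := by
    intro j1 j2 heq
    have e := congrArg Fin.val heq
    have c1 := cw j1
    have c2 := cw j2
    have l1 := wlt j1
    have l2 := wlt j2
    simp only [g] at e
    split_ifs at e <;> simp only [Fin.val_mk] at e <;> exact injw j1 j2 (by omega)
  have hcard := Fintype.card_le_of_injective g ginj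
  simp only [Fintype.card_fin] at hcard
  omega

set_option maxHeartbeats 2000000 in
theorem classify {n : ℕ} (π : Equiv.Perm (Fin (2 * n))) (hd : IsDumont4 n π)
    (hav : Avoids π p1324) :
    π = 1 ∨ ∃ (a k : ℕ) (hak : a ≤ k) (hk : k + 2 ≤ 2 * n), Odd a ∧ π = Dperm n a k hak hk := by
  rcases Nat.eq_zero_or_pos n with hn | hn
  · left; subst hn; ext i; exact i.elim0
  have hne := no_early hd hav
  have hlast : 2 * n - 1 < 2 * n := by omega
  obtain ⟨a, hae⟩ : ∃ x : ℕ, (π ⟨2 * n - 1, hlast⟩ : ℕ) = x := ⟨_, rfl⟩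
  have halt : a < 2 * n := hae ▸ (π _).isLt
  by_cases hA : a = 2 * n - 1
  · left
    have hge : ∀ i : Fin (2 * n), (i : ℕ) ≤ (π i : ℕ) := by
      intro i
      rcases Nat.lt_or_ge (i : ℕ) (2 * n - 1) with h | h
      · exact hne i h
      · have hi : i = ⟨2 * n - 1, hlast⟩ := Fin.ext (show (i : ℕ) = 2 * n - 1 by have := i.isLt; omega)
        rw [hi]
        exact (show (2 * n - 1 : ℕ) ≤ (π ⟨2 * n - 1, hlast⟩ : ℕ) by omega)
    have hsum : ∑ i : Fin (2 * n), ((π i : ℕ)) = ∑ i : Fin (2 * n), (i : ℕ) :=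
      Equiv.sum_comp π (fun i => (i : ℕ))
    have heq := (Finset.sum_eq_sum_iff_of_le (fun i _ => hge i)).mp hsum.symm
    ext i
    exact ((heq i (Finset.mem_univ i)).symm : (π i : ℕ) = ((1 : Equiv.Perm (Fin (2*n))) i : ℕ))
  · right
    have haL : a < 2 * n - 1 := by omega
    have hodd : Odd a := by
      obtain ⟨_, h2⟩ := hd ⟨2 * n - 1, hlast⟩ (by rw [hae]; exact haL)
      rw [hae, Nat.even_iff] at h2
      exact Nat.odd_iff.mpr (by omega)
    have ha1 : 1 ≤ a := hodd.pos
    have hK1 : π (π.symm ⟨2 * n - 1, hlast⟩) = ⟨2 * n - 1, hlast⟩ := π.apply_symm_apply _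
    obtain ⟨k, hke⟩ : ∃ x : ℕ, ((π.symm ⟨2 * n - 1, hlast⟩ : Fin (2 * n)) : ℕ) = x := ⟨_, rfl⟩
    have hklt' : k < 2 * n := hke ▸ (π.symm _).isLt
    have hkne : k ≠ 2 * n - 1 := by
      intro h
      have hKL : (π.symm ⟨2 * n - 1, hlast⟩ : Fin (2 * n)) = ⟨2 * n - 1, hlast⟩ :=
        Fin.ext (by rw [hke, h])
      rw [hKL] at hK1
      exact hA (by rw [← hae, hK1])
    have hklt : k ≤ 2 * n - 2 := by omega
    have hKmk : (π.symm ⟨2 * n - 1, hlast⟩ : Fin (2 * n)) = ⟨k, hklt'⟩ := Fin.ext hke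
    have hπk : (π ⟨k, hklt'⟩ : ℕ) = 2 * n - 1 := by rw [← hKmk, hK1]
    have fix_lo : ∀ w : ℕ, ∀ hw : w < 2 * n, w < a → (π ⟨w, hw⟩ : ℕ) = w := by
      intro w
      induction w using Nat.strong_induction_on with
      | _ w IH =>
        intro hw hwa
        have hj1 : π (π.symm ⟨w, hw⟩) = ⟨w, hw⟩ := π.apply_symm_apply _
        have hjL : ((π.symm ⟨w, hw⟩ : Fin (2 * n)) : ℕ) ≠ 2 * n - 1 := by
          intro h
          have hje : (π.symm ⟨w, hw⟩ : Fin (2 * n)) = ⟨2 * n - 1, hlast⟩ := Fin.ext h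
          rw [hje] at hj1
          have h2 : a = w := by rw [← hae, hj1]
          omega
        have hjlt : ((π.symm ⟨w, hw⟩ : Fin (2 * n)) : ℕ) < 2 * n - 1 := by
          have := (π.symm ⟨w, hw⟩).isLt; omega
        have hjw : ((π.symm ⟨w, hw⟩ : Fin (2 * n)) : ℕ) ≤ w := by
          have h2 := hne _ hjlt
          rw [hj1] at h2
          exact h2
        rcases Nat.lt_or_ge ((π.symm ⟨w, hw⟩ : Fin (2 * n)) : ℕ) w with h | h
        · exfalso
          have h2 := IH _ h (π.symm ⟨w, hw⟩).isLt (lt_trans h hwa)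
          rw [Fin.eta, hj1] at h2
          have h3 : w = ((π.symm ⟨w, hw⟩ : Fin (2 * n)) : ℕ) := h2
          omega
        · have hje : (π.symm ⟨w, hw⟩ : Fin (2 * n)) = ⟨w, hw⟩ :=
            Fin.ext (show ((π.symm ⟨w, hw⟩ : Fin (2 * n)) : ℕ) = w by omega)
          rw [hje] at hj1
          exact congrArg Fin.val hj1
    have hak : a ≤ k := by
      by_contra hcon
      push_neg at hcon
      have h2 := fix_lo k hklt' hcon
      rw [hπk] at h2
      omega
    have fix_hi : ∀ d i : ℕ, ∀ hi : i < 2 * n, 2 * n - 2 - i = d → k < i → i ≤ 2 * n - 2 →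
        (π ⟨i, hi⟩ : ℕ) = i := by
      intro d
      induction d using Nat.strong_induction_on with
      | _ d IH =>
        intro i hi hdi hki hi2
        have hp : i ≤ (π ⟨i, hi⟩ : ℕ) := hne ⟨i, hi⟩ (show i < 2 * n - 1 by omega)
        have hplt : (π ⟨i, hi⟩ : ℕ) < 2 * n := (π _).isLt
        have hpne : (π ⟨i, hi⟩ : ℕ) ≠ 2 * n - 1 := by
          intro h
          have h3 : π ⟨i, hi⟩ = π ⟨k, hklt'⟩ := Fin.ext (by rw [h, hπk])
          have h4 : i = k := congrArg Fin.val (π.injective h3)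
          omega
        rcases Nat.eq_or_lt_of_le hp with he | hlt2
        · exact he.symm
        · exfalso
          have h2 := IH (2 * n - 2 - (π ⟨i, hi⟩ : ℕ)) (by omega) (π ⟨i, hi⟩ : ℕ)
            (by omega) rfl (by omega) (by omega)
          have h3 : π ⟨(π ⟨i, hi⟩ : ℕ), by omega⟩ = π ⟨i, hi⟩ := Fin.ext h2
          have h4 : (π ⟨i, hi⟩ : ℕ) = i := congrArg Fin.val (π.injective h3)
          omega
    have succ_mid : ∀ i : ℕ, ∀ hi : i < 2 * n, a ≤ i → i < k → (π ⟨i, hi⟩ : ℕ) = i + 1 := by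
      intro i
      induction i using Nat.strong_induction_on with
      | _ i IH =>
        intro hi hai hik
        have hp : i ≤ (π ⟨i, hi⟩ : ℕ) := hne ⟨i, hi⟩ (show i < 2 * n - 1 by omega)
        have hplt : (π ⟨i, hi⟩ : ℕ) < 2 * n := (π _).isLt
        have hpne : (π ⟨i, hi⟩ : ℕ) ≠ 2 * n - 1 := by
          intro h
          have h3 : π ⟨i, hi⟩ = π ⟨k, hklt'⟩ := Fin.ext (by rw [h, hπk])
          have h4 : i = k := congrArg Fin.val (π.injective h3)
          omega
        have hpnei : (π ⟨i, hi⟩ : ℕ) ≠ i := by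
          intro h
          rcases Nat.eq_or_lt_of_le hai with he | hlt2
          · have h3 : π ⟨i, hi⟩ = π ⟨2 * n - 1, hlast⟩ := Fin.ext (by rw [h, hae]; omega)
            have h4 : i = 2 * n - 1 := congrArg Fin.val (π.injective h3)
            omega
          · have him1 : i - 1 < 2 * n := by omega
            have h2 := IH (i - 1) (by omega) him1 (by omega) (by omega)
            have h3 : π ⟨i - 1, him1⟩ = ⟨i, hi⟩ :=
              Fin.ext (show (π ⟨i - 1, him1⟩ : ℕ) = i by omega)
            have h4 : π ⟨i, hi⟩ = ⟨i, hi⟩ := Fin.ext h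
            have h6 : i - 1 = i := congrArg Fin.val (π.injective (h3.trans h4.symm))
            omega
        rcases Nat.lt_or_ge (i + 1) (π ⟨i, hi⟩ : ℕ) with hbig | hsm
        · exfalso
          have hi1 : i + 1 < 2 * n := by omega
          have hP1 : π (π.symm ⟨i + 1, hi1⟩) = ⟨i + 1, hi1⟩ := π.apply_symm_apply _
          obtain ⟨q, hqe⟩ : ∃ x : ℕ, ((π.symm ⟨i + 1, hi1⟩ : Fin (2 * n)) : ℕ) = x := ⟨_, rfl⟩
          have hqlt : q < 2 * n := hqe ▸ (π.symm _).isLt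
          have hPmk : (π.symm ⟨i + 1, hi1⟩ : Fin (2 * n)) = ⟨q, hqlt⟩ := Fin.ext hqe
          have hπq : (π ⟨q, hqlt⟩ : ℕ) = i + 1 := by rw [← hPmk, hP1]
          have hqL : q ≠ 2 * n - 1 := by
            intro h
            have h3 : π ⟨q, hqlt⟩ = π ⟨2 * n - 1, hlast⟩ := congrArg π (Fin.ext h)
            have h4 := congrArg Fin.val h3
            rw [hπq, hae] at h4
            omega
          have hqle : q ≤ i + 1 := by
            have h2 := hne ⟨q, hqlt⟩ (show q < 2 * n - 1 by omega)
            rw [hπq] at h2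
            exact h2
          have hq : q = i + 1 := by
            rcases Nat.lt_or_ge q a with h | h
            · exfalso
              have h2 := fix_lo q hqlt h
              rw [hπq] at h2
              omega
            · rcases Nat.lt_or_ge q i with h4 | h4
              · exfalso
                have h2 := IH q h4 hqlt h (by omega)
                rw [hπq] at h2
                omega
              · rcases Nat.eq_or_lt_of_le h4 with h5 | h5
                · exfalso
                  have h3 : π ⟨q, hqlt⟩ = π ⟨i, hi⟩ := congrArg π (Fin.ext (show q = i by omega))
                  have h6 := congrArg Fin.val h3
                  rw [hπq] at h6
                  omega
                · omega
          have hfixval : (π ⟨i + 1, hi1⟩ : ℕ) = i + 1 := by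
            have h3 : (⟨i + 1, hi1⟩ : Fin (2 * n)) = ⟨q, hqlt⟩ := Fin.ext (show i + 1 = q by omega)
            rw [h3, hπq]
          have hi1k : i + 1 ≠ k := by
            intro h5
            have h3 : π ⟨i + 1, hi1⟩ = π ⟨k, hklt'⟩ := congrArg π (Fin.ext h5)
            have h6 := congrArg Fin.val h3
            rw [hfixval, hπk] at h6
            omega
          have h0 : (π ⟨0, by omega⟩ : ℕ) = 0 := pi_zero hd hn
          refine avoid_helper hav ⟨0, by omega⟩ ⟨i, hi⟩ ⟨i + 1, hi1⟩ (π.symm ⟨2 * n - 1, hlast⟩)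
            ?_ ?_ ?_ ?_ ?_ ?_
          · exact (show (0 : ℕ) < i by omega)
          · exact (show i < i + 1 by omega)
          · rw [Fin.lt_def, hke]
            exact (show i + 1 < k by omega)
          · rw [Fin.lt_def, h0, hfixval]
            exact (show (0 : ℕ) < i + 1 by omega)
          · rw [Fin.lt_def, hfixval]
            exact hbig
          · rw [Fin.lt_def, hK1]
            exact (show (π ⟨i, hi⟩ : ℕ) < 2 * n - 1 by omega)
        · omega
    refine ⟨a, k, hak, by omega, hodd, ?_⟩
    ext i
    rw [Dperm_val]
    by_cases h1 : (i : ℕ) = 2 * n - 1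
    · rw [if_pos h1]
      have hi : i = ⟨2 * n - 1, hlast⟩ := Fin.ext h1
      rw [hi, hae]
    rw [if_neg h1]
    by_cases h2 : (i : ℕ) = k
    · rw [if_pos h2]
      have hi : i = ⟨k, hklt'⟩ := Fin.ext h2
      rw [hi, hπk]
    rw [if_neg h2]
    by_cases h3 : a ≤ (i : ℕ) ∧ (i : ℕ) < k
    · rw [if_pos h3]
      have h4 := succ_mid (i : ℕ) i.isLt h3.1 h3.2
      rwa [Fin.eta] at h4
    · rw [if_neg h3]
      rcases Nat.lt_or_ge (i : ℕ) a with h5 | h5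
      · have h4 := fix_lo (i : ℕ) i.isLt h5
        rwa [Fin.eta] at h4
      · have h6 : k < (i : ℕ) := by omega
        have h4 := fix_hi (2 * n - 2 - (i : ℕ)) (i : ℕ) i.isLt rfl h6 (by omega)
        rwa [Fin.eta] at h4

noncomputable def G (n : ℕ) (o : Option {p : Fin n × Fin n // p.1 ≠ p.2}) :
    {π : Equiv.Perm (Fin (2 * n)) // IsDumont4 n π ∧ Avoids π p1324} :=
  match o with
  | none => ⟨1, one_isDumont n, one_avoids n⟩
  | some p =>
    if h : (p.1.1 : ℕ) < (p.1.2 : ℕ) then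
      ⟨Dperm n (2 * (p.1.1 : ℕ) + 1) ((p.1.1 : ℕ) + (p.1.2 : ℕ)) (by omega)
        (by have := p.1.1.isLt; have := p.1.2.isLt; omega),
       Dperm_isDumont _ _ _ _ _ ⟨(p.1.1 : ℕ), rfl⟩, Dperm_avoids _ _ _ _ _⟩
    else
      ⟨Dperm n (2 * (p.1.2 : ℕ) + 1) (2 * n - 1 - ((p.1.1 : ℕ) - (p.1.2 : ℕ)))
        (by
          have h1 := not_lt.mp h
          have h2 : (p.1.1 : ℕ) ≠ (p.1.2 : ℕ) := fun hh => p.2 (Fin.ext hh)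
          have := p.1.1.isLt; have := p.1.2.isLt; omega)
        (by
          have h1 := not_lt.mp h
          have h2 : (p.1.1 : ℕ) ≠ (p.1.2 : ℕ) := fun hh => p.2 (Fin.ext hh)
          have := p.1.1.isLt; have := p.1.2.isLt; omega),
       Dperm_isDumont _ _ _ _ _ ⟨(p.1.2 : ℕ), rfl⟩, Dperm_avoids _ _ _ _ _⟩

lemma subval {α : Type*} {P : α → Prop} (x : α) (h : P x) : (⟨x, h⟩ : Subtype P).val = x := rfl

lemma G_inj (n : ℕ) : Function.Injective (G n) := by
  intro o1 o2 h
  have hv := congrArg Subtype.val h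
  match o1, o2 with
  | none, none => rfl
  | none, some p =>
    exfalso
    simp only [G] at hv
    split_ifs at hv <;> simp only [subval] at hv <;>
      exact Dperm_ne_one _ _ _ _ _ hv.symm
  | some p, none =>
    exfalso
    simp only [G] at hv
    split_ifs at hv <;> simp only [subval] at hv <;>
      exact Dperm_ne_one _ _ _ _ _ hv
  | some p, some p' =>
    have hb1 := p.1.1.isLt
    have hb2 := p.1.2.isLt
    have hb3 := p'.1.1.isLt
    have hb4 := p'.1.2.isLt
    have hne : (p.1.1 : ℕ) ≠ (p.1.2 : ℕ) := fun hh => p.2 (Fin.ext hh)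
    have hne' : (p'.1.1 : ℕ) ≠ (p'.1.2 : ℕ) := fun hh => p'.2 (Fin.ext hh)
    simp only [G] at hv
    have hgoal : (p.1.1 : ℕ) = (p'.1.1 : ℕ) ∧ (p.1.2 : ℕ) = (p'.1.2 : ℕ) := by
      split_ifs at hv with h1 h2 h2 <;> simp only [subval] at hv <;>
        obtain ⟨e1, e2⟩ := Dperm_inj _ _ _ _ _ _ _ _ _ hv <;> omega
    congr 1
    exact Subtype.ext (Prod.ext (Fin.ext hgoal.1) (Fin.ext hgoal.2))
lemma Dperm_congr (n a k a' k' : ℕ) (hak : a ≤ k) (hk : k + 2 ≤ 2 * n)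
    (ha : a = a') (hkk : k = k') :
    Dperm n a k hak hk = Dperm n a' k' (ha ▸ hkk ▸ hak) (hkk ▸ hk) := by
  subst ha hkk
  rfl

lemma G_surj (n : ℕ) : Function.Surjective (G n) := by
  rintro ⟨π, hd, hav⟩
  rcases classify π hd hav with h1 | ⟨a, k, hak, hk2, hodd, rfl⟩
  · exact ⟨none, Subtype.ext h1.symm⟩
  · obtain ⟨j, rfl⟩ := hodd
    have hn : 1 ≤ n := by omega
    rcases Nat.lt_or_ge k (n + j) with hc | hc
    · -- x = j, y = k - j
      have hjn : j < n := by omega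
      have hyn : k - j < n := by omega
      refine ⟨some ⟨(⟨j, hjn⟩, ⟨k - j, hyn⟩), fun hh => ?_⟩, ?_⟩
      · have := congrArg Fin.val hh
        simp only [Fin.val_mk] at this
        omega
      · apply Subtype.ext
        simp only [G]
        rw [dif_pos (show j < k - j by omega)]
        rw [subval]
        exact Dperm_congr n _ _ (2 * j + 1) k _ _ rfl (show j + (k - j) = k by omega)
    · -- x = j + (2n-1-k), y = j
      have hjn : j < n := by omega
      have hxn : j + (2 * n - 1 - k) < n := by omega
      refine ⟨some ⟨(⟨j + (2 * n - 1 - k), hxn⟩, ⟨j, hjn⟩), fun hh => ?_⟩, ?_⟩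
      · have := congrArg Fin.val hh
        simp only [Fin.val_mk] at this
        omega
      · apply Subtype.ext
        simp only [G]
        rw [dif_neg (show ¬(j + (2 * n - 1 - k) < j) by omega)]
        rw [subval]
        exact Dperm_congr n _ _ (2 * j + 1) k _ _ rfl
          (show 2 * n - 1 - (j + (2 * n - 1 - k) - j) = k by omega)

lemma card_par (n : ℕ) : Fintype.card {p : Fin n × Fin n // p.1 ≠ p.2} = n * n - n := by
  have e : {p : Fin n × Fin n // p.1 = p.2} ≃ Fin n :=
    { toFun := fun s => s.1.1
      invFun := fun x => ⟨(x, x), rfl⟩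
      left_inv := fun s => Subtype.ext (Prod.ext rfl s.2)
      right_inv := fun x => rfl }
  have h1 : Fintype.card {p : Fin n × Fin n // p.1 = p.2} = n := by
    rw [Fintype.card_congr e, Fintype.card_fin]
  have h2 := Fintype.card_subtype_compl (fun p : Fin n × Fin n => p.1 = p.2)
  rw [h1] at h2
  simp only [Fintype.card_prod, Fintype.card_fin] at h2
  convert h2 using 2


/-- The number of Dumont-4 permutations of length 2n avoiding 1324 is n² - n + 1. -/
theorem stmt_9 (n : ℕ) :
    Nat.card {π : Equiv.Perm (Fin (2 * n)) // IsDumont4 n π ∧ Avoids π p1324} = n ^ 2 - n + 1 := by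
  have h1 := Nat.card_eq_of_bijective (G n) ⟨G_inj n, G_surj n⟩
  rw [← h1, Nat.card_eq_fintype_card, Fintype.card_option, card_par]
  rcases Nat.eq_zero_or_pos n with h | h
  · subst h; rfl
  · have h2 : n ≤ n * n := Nat.le_mul_of_pos_left n h
    have h3 : n ^ 2 = n * n := sq n
    omega
end

section
/- If π is a Dumont permutation of the fourth kind of length 2n avoiding 1324 whose last entry is not 2n, then the last entry is even, say 2k with 1 ≤ k ≤ n-1, the values 1,...,2k-1 are all fixed points of π, all entries other than 2n and 2k occur in increasing order, and 2n occupies some position l with 2k ≤ l ≤ 2n-1. -/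
/-!
Let `b = π(2n)` be the last entry (1-based). Since `b ≤ 2n`, either `b = 2n` or `b` is a
deficiency value; in both cases `b` is even. The values below `b` are fixed points: if `v` were
the first non-fixed one, it would be a deficiency value at a later position, while `v + 1`, of the
wrong parity for a deficiency value, would lie at position `v` or `v + 1`; together with `v - 1`
and `b` this is a 1324. Above `b`, an inversion `π(i) > π(j)`, `i < j`, is closed to a 1324 by
the fixed point `b - 1` on the left and, by downward induction on `j`, the entry at `j + 1`,
which exceeds `π(i)`; the induction starts at the odd position `2n - 1`,
which is not a deficiency and so carries `2n - 1` or `2n`.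
-/

lemma patternContains_p1324_of_lt {N : ℕ} (π : Equiv.Perm (Fin N)) {x₀ x₁ x₂ x₃ : Fin N}
    (h₀₁ : x₀ < x₁) (h₁₂ : x₁ < x₂) (h₂₃ : x₂ < x₃)
    (v₀₂ : π x₀ < π x₂) (v₂₁ : π x₂ < π x₁) (v₁₃ : π x₁ < π x₃) :
    PatternContains π p1324 := by
  refine ⟨![x₀, x₁, x₂, x₃], Fin.strictMono_iff_lt_succ.2 fun i => ?_, fun a b => ?_⟩
  · fin_cases i <;> assumption
  · fin_cases a <;> fin_cases b <;> simp [p1324] <;> order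

lemma le_apply_iff_of_forall_lt_apply_eq_self {N v : ℕ} {σ : Equiv.Perm (Fin N)}
    (hfix : ∀ x : Fin N, (x : ℕ) < v → σ x = x) (y : Fin N) :
    v ≤ (σ y : ℕ) ↔ v ≤ (y : ℕ) := by
  constructor
  · intro h
    by_contra! hy
    rw [hfix y hy] at h
    omega
  · intro h
    by_contra! hy
    rw [← σ.injective (hfix (σ y) hy)] at h
    omega

namespace IsDumont4

variable {n : ℕ} {π : Equiv.Perm (Fin (2 * n))}

lemma odd_of_apply_lt (hπ : IsDumont4 n π) {i : Fin (2 * n)} (h : π i < i) :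
    (i : ℕ) % 2 = 1 ∧ (π i : ℕ) % 2 = 1 := by
  have := hπ i h
  simp only [Nat.even_iff] at this
  omega

lemma apply_last_mod_two_eq_one (hπ : IsDumont4 n π) {ℓ : Fin (2 * n)} (hℓ : (ℓ : ℕ) + 1 = 2 * n) :
    (π ℓ : ℕ) % 2 = 1 := by
  by_cases h : π ℓ < ℓ
  · exact (hπ.odd_of_apply_lt h).2
  · have := (π ℓ).isLt
    rw [Fin.not_lt, Fin.le_def] at h
    omega

-- A non-fixed `x` yields the 1324 `(x - 1, π⁻¹ (x + 1), π⁻¹ x, ℓ)`.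
lemma apply_eq_self_of_forall_lt_apply_eq_self (hπ : IsDumont4 n π) (hav : Avoids π p1324)
    {ℓ : Fin (2 * n)} (hℓ : (ℓ : ℕ) + 1 = 2 * n) {x : Fin (2 * n)}
    (hfix : ∀ y : Fin (2 * n), (y : ℕ) < x → π y = y) (hx : (x : ℕ) < π ℓ) : π x = x := by
  by_contra hne
  have hℓ_odd := hπ.apply_last_mod_two_eq_one hℓ
  obtain ⟨p, hp⟩ := π.surjective x
  have hxp : x < p := by
    have hxp := (le_apply_iff_of_forall_lt_apply_eq_self hfix p).1 (by rw [hp])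
    have hpx : (p : ℕ) ≠ x := fun h => hne (Fin.ext h ▸ hp)
    rw [Fin.lt_def]
    omega
  have hx_odd := (hπ.odd_of_apply_lt (hp ▸ hxp)).2
  rw [hp] at hx_odd
  obtain ⟨r, hr⟩ := π.surjective ⟨x + 1, by omega⟩
  have hr_val : (π r : ℕ) = x + 1 := by rw [hr]
  have hxr := (le_apply_iff_of_forall_lt_apply_eq_self hfix r).1 (by omega)
  have hrx : (r : ℕ) ≤ x + 1 := by
    by_contra! h
    have := (hπ.odd_of_apply_lt (i := r) (by rw [Fin.lt_def]; omega)).2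
    omega
  have hpℓ : p ≠ ℓ := by
    rintro rfl
    rw [hp] at hℓ_odd hx
    omega
  have hrp : r ≠ p := by
    rintro rfl
    rw [hp] at hr_val
    omega
  rw [Fin.lt_def] at hxp
  rw [← Fin.val_ne_iff] at hpℓ hrp
  have h₀ : π ⟨x - 1, by omega⟩ = ⟨x - 1, by omega⟩ := hfix _ (by simp only; omega)
  refine hav (patternContains_p1324_of_lt π (x₀ := ⟨x - 1, by omega⟩) (x₁ := r) (x₂ := p)
    (x₃ := ℓ) ?_ ?_ ?_ ?_ ?_ ?_) <;> simp only [Fin.lt_def, h₀, hp] <;> omega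

lemma apply_eq_self_of_lt_apply_last (hπ : IsDumont4 n π) (hav : Avoids π p1324)
    {ℓ : Fin (2 * n)} (hℓ : (ℓ : ℕ) + 1 = 2 * n) :
    ∀ x : Fin (2 * n), (x : ℕ) < π ℓ → π x = x := by
  suffices ∀ v ≤ (π ℓ : ℕ), ∀ x : Fin (2 * n), (x : ℕ) < v → π x = x from this _ le_rfl
  intro v
  induction v with
  | zero => simp
  | succ v ih =>
    intro hv x hx
    rcases Nat.lt_succ_iff_lt_or_eq.1 hx with hx | hx
    · exact ih (by omega) x hx
    · exact hπ.apply_eq_self_of_forall_lt_apply_eq_self hav hℓ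
        (fun y hy => ih (by omega) y (by omega)) (by omega)

-- Downward induction on `j`: an inversion `π j < π i` gives the 1324 `(π ℓ - 1, i, j, j + 1)`.
lemma apply_lt_apply_of_apply_last_lt (hπ : IsDumont4 n π) (hav : Avoids π p1324)
    {ℓ : Fin (2 * n)} (hℓ : (ℓ : ℕ) + 1 = 2 * n) {i : Fin (2 * n)} (hi : (π ℓ : ℕ) < π i)
    (hi_max : (π i : ℕ) ≠ 2 * n - 1) :
    ∀ j : Fin (2 * n), i < j → (j : ℕ) + 2 ≤ 2 * n → π i < π j := by
  have hfix := hπ.apply_eq_self_of_lt_apply_last hav hℓ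
  have hbi := (le_apply_iff_of_forall_lt_apply_eq_self hfix i).1 hi.le
  have hb_odd := hπ.apply_last_mod_two_eq_one hℓ
  suffices ∀ d, ∀ j : Fin (2 * n), (j : ℕ) + 2 + d = 2 * n → i < j → π i < π j from
    fun j hij hj => this (2 * n - 2 - j) j (by omega) hij
  intro d
  induction d with
  | zero =>
    intro j hj hij
    -- position `2n - 2` (1-based `2n - 1`, odd) is no deficiency, so `π j ∈ {2n - 2, 2n - 1}`
    have hj_le : (j : ℕ) ≤ π j := by
      by_contra! h
      have := (hπ.odd_of_apply_lt (Fin.lt_def.2 h)).1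
      omega
    have hij' := Fin.val_ne_of_ne (π.injective.ne hij.ne)
    have := (π j).isLt
    rw [Fin.lt_def]
    omega
  | succ d ih =>
    intro j hj hij
    rw [Fin.lt_def] at hij
    have hnext := ih ⟨j + 1, by omega⟩ (by simp only; omega) (by rw [Fin.lt_def]; simp only; omega)
    by_contra! hji
    have hji : π j < π i := lt_of_le_of_ne hji (π.injective.ne (Fin.ne_of_val_ne hij.ne'))
    have hbj := (le_apply_iff_of_forall_lt_apply_eq_self hfix j).2 (by omega)
    have h₀ : π ⟨π ℓ - 1, by omega⟩ = ⟨π ℓ - 1, by omega⟩ := hfix _ (by simp only; omega)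
    refine hav (patternContains_p1324_of_lt π (x₀ := ⟨π ℓ - 1, by omega⟩) (x₁ := i) (x₂ := j)
      (x₃ := ⟨j + 1, by omega⟩) ?_ ?_ ?_ ?_ hji hnext) <;> simp only [Fin.lt_def, h₀] <;> omega

lemma apply_lt_apply (hπ : IsDumont4 n π) (hav : Avoids π p1324)
    {ℓ : Fin (2 * n)} (hℓ : (ℓ : ℕ) + 1 = 2 * n) {i j : Fin (2 * n)} (hij : i < j)
    (hi_max : (π i : ℕ) ≠ 2 * n - 1) (hi : π i ≠ π ℓ) (hj : π j ≠ π ℓ) : π i < π j := by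
  have hjℓ : (j : ℕ) + 2 ≤ 2 * n := by
    have : j ≠ ℓ := by rintro rfl; exact hj rfl
    have := Fin.val_ne_of_ne this
    omega
  rcases lt_or_gt_of_ne hi with hi_lt | hi_gt
  · have hfix := hπ.apply_eq_self_of_lt_apply_last hav hℓ
    have hiℓ := le_apply_iff_of_forall_lt_apply_eq_self hfix i
    have hjℓ := le_apply_iff_of_forall_lt_apply_eq_self hfix j
    rw [Fin.lt_def] at hi_lt hij ⊢
    by_cases hj' : (π ℓ : ℕ) ≤ π j
    · omega
    · rw [hfix i (by omega), hfix j (by omega)]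
      exact hij
  · exact hπ.apply_lt_apply_of_apply_last_lt hav hℓ hi_gt hi_max j hij hjℓ

end IsDumont4

/-- Structure of a 1324-avoiding Dumont-4 permutation whose last entry is not 2n:
the last entry is an even value 2k (1 ≤ k ≤ n-1), the values 1,…,2k-1 are fixed points,
all entries other than 2n and 2k occur in increasing order, and 2n occupies some
(1-based) position l with 2k ≤ l ≤ 2n-1.  (0-based: value v corresponds to v-1.) -/
theorem stmt_11 (n : ℕ) (hn : 1 ≤ n) (π : Equiv.Perm (Fin (2 * n)))
    (hπ : IsDumont4 n π) (hav : Avoids π p1324)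
    (hlast : (π ⟨2 * n - 1, by omega⟩ : ℕ) ≠ 2 * n - 1) :
    ∃ (k : ℕ) (hk1 : 1 ≤ k) (hk2 : k ≤ n - 1),
      (π ⟨2 * n - 1, by omega⟩ : ℕ) = 2 * k - 1 ∧
      (∀ (j : ℕ) (hj : j < 2 * k - 1), π ⟨j, by omega⟩ = ⟨j, by omega⟩) ∧
      (∀ i j : Fin (2 * n), i < j →
        (π i : ℕ) ≠ 2 * n - 1 → (π j : ℕ) ≠ 2 * n - 1 →
        (π i : ℕ) ≠ 2 * k - 1 → (π j : ℕ) ≠ 2 * k - 1 → π i < π j) ∧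
      (∃ (l : ℕ) (hl1 : 2 * k ≤ l) (hl2 : l ≤ 2 * n - 1),
        (π ⟨l - 1, by omega⟩ : ℕ) = 2 * n - 1) := by
  have hℓ : ((⟨2 * n - 1, by omega⟩ : Fin (2 * n)) : ℕ) + 1 = 2 * n := by simp only; omega
  have hb_odd := hπ.apply_last_mod_two_eq_one hℓ
  have hb_lt := (π ⟨2 * n - 1, by omega⟩).isLt
  have hfix := hπ.apply_eq_self_of_lt_apply_last hav hℓ
  obtain ⟨L, hL⟩ := π.surjective ⟨2 * n - 1, by omega⟩
  have hbL := (le_apply_iff_of_forall_lt_apply_eq_self hfix L).1 (by rw [hL]; simp only; omega)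
  have hLℓ : L ≠ ⟨2 * n - 1, by omega⟩ := fun h => hlast (by rw [← h, hL])
  replace hLℓ := Fin.val_ne_of_ne hLℓ
  simp only at hLℓ
  refine ⟨(π ⟨2 * n - 1, by omega⟩ + 1) / 2, by omega, by omega, by omega,
    fun j hj => hfix _ (by simp only; omega), fun i j hij hi _ hib hjb => ?_,
    L + 1, by omega, by omega, by simp [hL]⟩
  exact hπ.apply_lt_apply hav hℓ hij hi (fun h => hib (by rw [h]; omega))
    (fun h => hjb (by rw [h]; omega))
end

section
/- If a Dumont permutation of the fourth kind π of length 2n contains exactly one occurrence of the pattern 321, with that occurrence given by values c > b > a at increasing positions, then the middle value b is a fixed point of π, and the smallest value a is an even value occurring at an even position (a deficiency). -/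
/-- `σ` contains exactly one occurrence of the pattern 321. -/
def ExactlyOne321 {m : ℕ} (σ : Equiv.Perm (Fin m)) : Prop :=
  ∃! t : Fin m × Fin m × Fin m,
    t.1 < t.2.1 ∧ t.2.1 < t.2.2 ∧ σ t.2.2 < σ t.2.1 ∧ σ t.2.1 < σ t.1


/-- If a Dumont-4 permutation has exactly one occurrence of 321, given by values
π i > π j > π k at positions i < j < k, then the middle value is a fixed point and
the smallest value is an even value at an even (1-based) position. -/
theorem stmt_15 (n : ℕ) (π : Equiv.Perm (Fin (2 * n)))
    (hπ : IsDumont4 n π) (hone : ExactlyOne321 π)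
    (i j k : Fin (2 * n)) (hij : i < j) (hjk : j < k)
    (h1 : π k < π j) (h2 : π j < π i) :
    π j = j ∧ Even ((π k : ℕ) + 1) ∧ Even ((k : ℕ) + 1) := by
  obtain ⟨t, ht, huniq⟩ := hone
  have hte : t = (i, j, k) := (huniq (i, j, k) ⟨hij, hjk, h1, h2⟩).symm
  subst hte
  have uniq : ∀ a b c : Fin (2 * n), a < b → b < c → π c < π b → π b < π a →
      a = i ∧ b = j ∧ c = k := by
    intro a b c u1 u2 u3 u4
    have h := huniq (a, b, c) ⟨u1, u2, u3, u4⟩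
    refine ⟨congrArg Prod.fst h, ?_, ?_⟩
    · simpa using congrArg (fun t => t.2.1) h
    · simpa using congrArg (fun t => t.2.2) h
  have hA : (Finset.univ.filter (fun p => π p < π j)) =
      insert k ((Finset.Iio j).erase i) := by
    ext p
    simp only [Finset.mem_filter, Finset.mem_univ, true_and, Finset.mem_insert,
      Finset.mem_erase, Finset.mem_Iio]
    constructor
    · intro hp
      by_cases hpk : p = k
      · exact Or.inl hpk
      refine Or.inr ⟨?_, ?_⟩
      · rintro rfl; exact absurd h2 (lt_asymm hp)
      · by_contra hpj
        push_neg at hpj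
        have hpj' : j < p := lt_of_le_of_ne hpj (by rintro rfl; exact lt_irrefl _ hp)
        exact hpk (uniq i j p hij hpj' hp h2).2.2
    · rintro (rfl | ⟨hpi, hpj⟩)
      · exact h1
      · by_contra hle
        push_neg at hle
        have hne : π j ≠ π p := fun h => (lt_irrefl p (π.injective h ▸ hpj))
        have hlt : π j < π p := lt_of_le_of_ne hle hne
        exact hpi (uniq p j k hpj hjk h1 hlt).1
  have hmap : (Finset.univ.filter (fun p => π p < π j)) =
      (Finset.Iio (π j)).map π.symm.toEmbedding := by
    ext p
    simp only [Finset.mem_filter, Finset.mem_univ, true_and, Finset.mem_map,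
      Finset.mem_Iio, Equiv.coe_toEmbedding]
    constructor
    · intro hp; exact ⟨π p, hp, π.symm_apply_apply p⟩
    · rintro ⟨v, hv, rfl⟩; simpa using hv
  have hcard1 : (Finset.univ.filter (fun p => π p < π j)).card = (π j : ℕ) := by
    rw [hmap, Finset.card_map, Fin.card_Iio]
  have hkne : k ∉ (Finset.Iio j).erase i := by
    intro hk
    have := (Finset.mem_erase.mp hk).2
    exact absurd (Finset.mem_Iio.mp this) (lt_asymm hjk)
  have hiin : i ∈ Finset.Iio j := Finset.mem_Iio.mpr hij
  have hcard2 : (insert k ((Finset.Iio j).erase i)).card = (j : ℕ) := by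
    rw [Finset.card_insert_of_notMem hkne, Finset.card_erase_of_mem hiin, Fin.card_Iio]
    have hj1 : 1 ≤ (j : ℕ) := by
      have : (i : ℕ) < (j : ℕ) := hij
      omega
    omega
  have hπj : (π j : ℕ) = (j : ℕ) := by rw [← hcard1, hA, hcard2]
  have hfix : π j = j := Fin.ext hπj
  have hdef : (π k : ℕ) < (k : ℕ) := by
    have hv : (π k : ℕ) < (π j : ℕ) := h1
    have hp : (j : ℕ) < (k : ℕ) := hjk
    omega
  obtain ⟨he1, he2⟩ := hπ k hdef
  exact ⟨hfix, he2, he1⟩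
end

section
/- For all n ≥ 2, the entry 3 in a Dumont permutation of the fourth kind of length 2n occurs in position 2 or position 3. -/
/-- For n ≥ 2, the entry 3 of a Dumont-4 permutation of length 2n is in
(1-based) position 2 or 3. -/
theorem stmt_17 (n : ℕ) (hn : 2 ≤ n) (π : Equiv.Perm (Fin (2 * n)))
    (hπ : IsDumont4 n π) :
    (π.symm ⟨2, by omega⟩ : ℕ) = 1 ∨ (π.symm ⟨2, by omega⟩ : ℕ) = 2 := by
  have h4 : (2:ℕ) < 2*n := by omega
  have h04 : (0:ℕ) < 2*n := by omega
  have hπj : π (π.symm ⟨2, h4⟩) = ⟨2, h4⟩ := π.apply_symm_apply _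
  have h1 : ((π.symm ⟨2, h4⟩ : Fin (2*n)) : ℕ) ≤ 2 := by
    by_contra h
    have hd := hπ (π.symm ⟨2, h4⟩) (by rw [hπj]; simp only [Fin.val_mk]; omega)
    rw [hπj] at hd
    simp only [Fin.val_mk] at hd
    exact (by decide : ¬ Even 3) hd.2
  have h0 : ((π.symm ⟨0, h04⟩ : Fin (2*n)) : ℕ) = 0 := by
    by_contra h
    have hps : π (π.symm ⟨0, h04⟩) = ⟨0, h04⟩ := π.apply_symm_apply _
    have hd := hπ (π.symm ⟨0, h04⟩) (by rw [hps]; simp only [Fin.val_mk]; omega)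
    rw [hps] at hd
    simp only [Fin.val_mk] at hd
    exact (by decide : ¬ Even 1) hd.2
  have hne : ((π.symm ⟨2, h4⟩ : Fin (2*n)) : ℕ) ≠ 0 := by
    intro h
    have he : (π.symm ⟨2, h4⟩ : Fin (2*n)) = π.symm ⟨0, h04⟩ := Fin.ext (by rw [h0, h])
    rw [he, π.apply_symm_apply] at hπj
    have := congrArg Fin.val hπj
    simp only [Fin.val_mk] at this
    omega
  have : ((π.symm ⟨2, by omega⟩ : Fin (2*n)) : ℕ) = ((π.symm ⟨2, h4⟩ : Fin (2*n)) : ℕ) := rfl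
  omega
end
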